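/- arXiv:2311.03073 — 15 statements merged into one kernel-verified Lean document; each statement's English description precedes it below -/
import Mathlib

section
/- Let r ≥ 1, let A = (a_{i,j}) be an r×r generalised Cartan matrix, and let S be a commutative semiring. If f : {1,…,r} × ℤ → S is an S-valued frieze pattern associated to A, then the map k : {1,…,r} × ℤ → S defined by k(i,m) = (∏_{j=i+1}^{r} f(j,m)^{-a_{j,i}})·(∏_{j=1}^{i-1} f(j,m+1)^{-a_{j,i}}) is an S-valued Y-frieze pattern associated to A. -/
/-- An r×r generalised Cartan matrix. -/
def IsGCM {r : ℕ} (A : Matrix (Fin r) (Fin r) ℤ) : Prop :=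
  (∀ i, A i i = 2) ∧ ∀ i j, i ≠ j → A i j ≤ 0 ∧ (A i j = 0 ↔ A j i = 0)

/-- An `S`-valued frieze pattern associated to `A`. -/
def IsFriezePat {r : ℕ} {S : Type*} [CommSemiring S] (A : Matrix (Fin r) (Fin r) ℤ)
    (f : Fin r → ℤ → S) : Prop :=
  ∀ i m, f i m * f i (m + 1) =
    1 + (∏ j ∈ Finset.univ.filter (fun j => i < j), f j m ^ (-(A j i)).toNat) *
        (∏ j ∈ Finset.univ.filter (fun j => j < i), f j (m + 1) ^ (-(A j i)).toNat)

/-- An `S`-valued Y-frieze pattern associated to `A`. -/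
def IsYFriezePat {r : ℕ} {S : Type*} [CommSemiring S] (A : Matrix (Fin r) (Fin r) ℤ)
    (k : Fin r → ℤ → S) : Prop :=
  ∀ i m, k i m * k i (m + 1) =
    (∏ j ∈ Finset.univ.filter (fun j => i < j), (1 + k j m) ^ (-(A j i)).toNat) *
    (∏ j ∈ Finset.univ.filter (fun j => j < i), (1 + k j (m + 1)) ^ (-(A j i)).toNat)

/-!
The frieze relation says exactly that `1 + k(j, m) = f(j, m) f(j, m+1)`. Substituting this
into the right-hand side of the Y-frieze relation for `k(i, m) k(i, m+1)` and expanding, both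
sides become the same monomial in the values of `f`.
-/

section FriezeMonomial

variable {r : ℕ} {S : Type*} [CommSemiring S] (A : Matrix (Fin r) (Fin r) ℤ)

def friezeMonomial (f : Fin r → ℤ → S) (i : Fin r) (m : ℤ) : S :=
  (∏ j ∈ Finset.univ.filter (fun j => i < j), f j m ^ (-(A j i)).toNat) *
  (∏ j ∈ Finset.univ.filter (fun j => j < i), f j (m + 1) ^ (-(A j i)).toNat)

theorem friezeMonomial_mul_friezeMonomial_add_one (f : Fin r → ℤ → S) (i : Fin r) (m : ℤ) :
    friezeMonomial A f i m * friezeMonomial A f i (m + 1) =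
      (∏ j ∈ Finset.univ.filter (fun j => i < j), (f j m * f j (m + 1)) ^ (-(A j i)).toNat) *
      (∏ j ∈ Finset.univ.filter (fun j => j < i),
        (f j (m + 1) * f j (m + 1 + 1)) ^ (-(A j i)).toNat) := by
  simp only [friezeMonomial, mul_pow, Finset.prod_mul_distrib]
  ring

theorem IsFriezePat.one_add_friezeMonomial {f : Fin r → ℤ → S} (hf : IsFriezePat A f)
    (i : Fin r) (m : ℤ) : 1 + friezeMonomial A f i m = f i m * f i (m + 1) :=
  (hf i m).symm

end FriezeMonomial

theorem frieze_to_Yfrieze_general {r : ℕ} {S : Type*} [CommSemiring S]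
    (A : Matrix (Fin r) (Fin r) ℤ)
    (f : Fin r → ℤ → S) (hf : IsFriezePat A f) :
    IsYFriezePat A (fun i m =>
      (∏ j ∈ Finset.univ.filter (fun j => i < j), f j m ^ (-(A j i)).toNat) *
      (∏ j ∈ Finset.univ.filter (fun j => j < i), f j (m + 1) ^ (-(A j i)).toNat)) := by
  change IsYFriezePat A (friezeMonomial A f)
  intro i m
  simp only [hf.one_add_friezeMonomial]
  exact friezeMonomial_mul_friezeMonomial_add_one A f i m

/-- Every frieze pattern gives rise to a Y-frieze pattern via the ensemble map. -/
theorem frieze_to_Yfrieze {r : ℕ} (hr : 1 ≤ r) {S : Type*} [CommSemiring S]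
    (A : Matrix (Fin r) (Fin r) ℤ) (hA : IsGCM A)
    (f : Fin r → ℤ → S) (hf : IsFriezePat A f) :
    IsYFriezePat A (fun i m =>
      (∏ j ∈ Finset.univ.filter (fun j => i < j), f j m ^ (-(A j i)).toNat) *
      (∏ j ∈ Finset.univ.filter (fun j => j < i), f j (m + 1) ^ (-(A j i)).toNat)) :=
  frieze_to_Yfrieze_general A f hf
end

section
/- Let r ≥ 1 and let f : {0,1,…,r,r+1} × ℤ → ℤ satisfy f(0,m) = f(r+1,m) = 1 and f(i,m) ≥ 1 for all i ∈ {1,…,r}, m ∈ ℤ, together with the diamond rule f(i,m)·f(i,m+1) = 1 + f(i+1,m)·f(i-1,m+1) for all i ∈ {1,…,r}, m ∈ ℤ. Define k : {0,1,…,r,r+1} × ℤ → ℤ by k(0,m) = k(r+1,m) = 0 and k(i,m) = f(i+1,m)·f(i-1,m+1) for i ∈ {1,…,r}. Then k(i,m) ≥ 1 and k(i,m)·k(i,m+1) = (1 + k(i+1,m))·(1 + k(i-1,m+1)) for all i ∈ {1,…,r} and m ∈ ℤ; in other words, every Coxeter frieze pattern of width r gives rise to a Y-frieze pattern of width r, whose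 Y-quiddity row is the second row of the frieze pattern. -/
/-- Every Coxeter frieze pattern of width `r` gives rise to a Y-frieze pattern of
width `r`, whose Y-quiddity row is the second row of the frieze pattern. -/
theorem coxeter_frieze_to_Yfrieze (r : ℕ) (hr : 1 ≤ r) (f k : ℕ → ℤ → ℤ)
    (hf0 : ∀ m, f 0 m = 1) (hfr : ∀ m, f (r + 1) m = 1)
    (hfpos : ∀ i m, 1 ≤ i → i ≤ r → 1 ≤ f i m)
    (hdiamond : ∀ i m, 1 ≤ i → i ≤ r →
      f i m * f i (m + 1) = 1 + f (i + 1) m * f (i - 1) (m + 1))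
    (hk0 : ∀ m, k 0 m = 0) (hkr : ∀ m, k (r + 1) m = 0)
    (hkdef : ∀ i m, 1 ≤ i → i ≤ r → k i m = f (i + 1) m * f (i - 1) (m + 1)) :
    (∀ i m, 1 ≤ i → i ≤ r → 1 ≤ k i m) ∧
    (∀ i m, 1 ≤ i → i ≤ r →
      k i m * k i (m + 1) = (1 + k (i + 1) m) * (1 + k (i - 1) (m + 1))) := by
  have hpos' : ∀ j m, j ≤ r + 1 → 1 ≤ f j m := by
    intro j m hj
    rcases Nat.eq_zero_or_pos j with h0 | h1
    · subst h0; rw [hf0]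
    · rcases eq_or_lt_of_le hj with h | h
      · subst h; rw [hfr]
      · exact hfpos j m h1 (Nat.lt_succ_iff.mp h)
  have hprod : ∀ j m, j ≤ r + 1 → 1 + k j m = f j m * f j (m + 1) := by
    intro j m hj
    rcases Nat.eq_zero_or_pos j with h0 | h1
    · subst h0; rw [hk0, hf0, hf0]; ring
    · rcases eq_or_lt_of_le hj with h | h
      · subst h; rw [hkr, hfr, hfr]; ring
      · have hjr := Nat.lt_succ_iff.mp h
        rw [hkdef j m h1 hjr, ← hdiamond j m h1 hjr]
  constructor
  · intro i m h1 h2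
    rw [hkdef i m h1 h2]
    exact one_le_mul_of_one_le_of_one_le (hpos' _ _ (by omega)) (hpos' _ _ (by omega))
  · intro i m h1 h2
    rw [hkdef i m h1 h2, hkdef i (m + 1) h1 h2,
      hprod (i + 1) m (by omega), hprod (i - 1) (m + 1) (by omega)]
    ring
end

section
/- Let r ≥ 1, let A = (a_{i,j}) be an r×r generalised Cartan matrix, and let F be a linearly ordered field. For every tuple (s_1,…,s_r) of positive elements of F there exists a unique map f : {1,…,r} × ℤ → F such that f(i,m) > 0 for all (i,m), f satisfies the frieze relation f(i,m)·f(i,m+1) = 1 + (∏_{j=i+1}^{r} f(j,m)^{-a_{j,i}})·(∏_{j=1}^{i-1} f(j,m+1)^{-a_{j,i}}) for all (i,m), and f(i,0) = s_i for all i ∈ {1,…,r}. -/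
/-!
Read the relation for `m` as a system in the column `f(·, m + 1)` given the column `f(·, m)`:
the equation for `i` determines `f(i, m + 1)` from the entries `f(j, m + 1)` with `j < i`, so
the system is triangular and has exactly one solution, which is positive. Symmetrically, the
column `f(·, m)` is determined by `f(·, m + 1)`, now solving in decreasing order of `i`. Hence
the frieze relation is the graph of a permutation of the set of positive columns, and a frieze
is the orbit of its initial column under that permutation.
-/

open Finset

section Triangular

variable {ι α : Type*} {R : ι → ι → Prop}

theorem WellFounded.existsUnique_of_triangular [Nonempty α] (hR : WellFounded R)
    (G : ι → (ι → α) → α) (hG : ∀ i y y', (∀ j, R j i → y j = y' j) → G i y = G i y')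
    (p : α → Prop) (hp : ∀ i y, (∀ j, R j i → p (y j)) → p (G i y)) :
    ∃! y : ι → α, (∀ i, p (y i)) ∧ ∀ i, y i = G i y := by
  classical
  let y : ι → α := hR.fix fun i rec =>
    G i fun j => if h : R j i then rec j h else Classical.arbitrary α
  have hy : ∀ i, y i = G i y := fun i =>
    (hR.fix_eq _ i).trans (hG i _ _ fun j hj => dif_pos hj)
  refine ⟨y, ⟨fun i => hR.induction i fun i ih => hy i ▸ hp i y ih, hy⟩, ?_⟩
  rintro y' ⟨-, hy'⟩
  exact funext fun i => hR.induction i fun i ih => (hy' i).trans ((hG i _ _ ih).trans (hy i).symm)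

variable {F : Type*} [Field F] [LinearOrder F] [IsStrictOrderedRing F]

theorem existsUnique_pos_of_triangular [Fintype ι] [DecidableRel R] (hR : WellFounded R)
    (e : ι → ι → ℕ) {a c : ι → F} (ha : ∀ i, 0 < a i) (hc : ∀ i, 0 < c i) :
    ∃! z : ι → F, (∀ i, 0 < z i) ∧
      ∀ i, a i * z i = 1 + c i * ∏ j ∈ univ.filter (R · i), z j ^ e j i := by
  have hsolve : ∀ z : ι → F, (∀ i, a i * z i = 1 + c i * ∏ j ∈ univ.filter (R · i), z j ^ e j i) ↔
      ∀ i, z i = (1 + c i * ∏ j ∈ univ.filter (R · i), z j ^ e j i) / a i := fun z =>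
    forall_congr' fun i => by rw [eq_div_iff (ha i).ne', mul_comm]
  simp_rw [hsolve]
  refine hR.existsUnique_of_triangular _ (fun i y y' h => ?_) (0 < ·) fun i y hy => ?_
  · rw [prod_congr rfl fun j hj => by rw [h j (mem_filter.1 hj).2]]
  · have : 0 < ∏ j ∈ univ.filter (R · i), y j ^ e j i :=
      prod_pos fun j hj => pow_pos (hy j (mem_filter.1 hj).2) _
    exact div_pos (by linarith [mul_pos (hc i) this]) (ha i)

end Triangular

theorem existsUnique_subtype_iff {α : Type*} {p q : α → Prop} :
    (∃! x : Subtype p, q x) ↔ ∃! a, p a ∧ q a := by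
  constructor
  · rintro ⟨⟨a, ha⟩, hq, huniq⟩
    exact ⟨a, ⟨ha, hq⟩, fun b hb => congr_arg Subtype.val (huniq ⟨b, hb.1⟩ hb.2)⟩
  · rintro ⟨a, ⟨ha, hq⟩, huniq⟩
    exact ⟨⟨a, ha⟩, hq, fun b hb => Subtype.ext (huniq b ⟨b.2, hb⟩)⟩

noncomputable def Equiv.ofExistsUnique {α β : Type*} (S : α → β → Prop)
    (h₁ : ∀ x, ∃! y, S x y) (h₂ : ∀ y, ∃! x, S x y) : α ≃ β where
  toFun x := (h₁ x).exists.choose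
  invFun y := (h₂ y).exists.choose
  left_inv x := (h₂ _).unique (h₂ _).exists.choose_spec (h₁ x).exists.choose_spec
  right_inv y := (h₁ _).unique (h₁ _).exists.choose_spec (h₂ y).exists.choose_spec

theorem Equiv.ofExistsUnique_apply_eq_iff {α β : Type*} {S : α → β → Prop}
    (h₁ : ∀ x, ∃! y, S x y) (h₂ : ∀ y, ∃! x, S x y) {x : α} {y : β} :
    Equiv.ofExistsUnique S h₁ h₂ x = y ↔ S x y :=
  ⟨fun h => h ▸ (h₁ x).exists.choose_spec, (h₁ x).unique (h₁ x).exists.choose_spec⟩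

theorem Equiv.Perm.existsUnique_orbit {β : Type*} (σ : Equiv.Perm β) (b : β) :
    ∃! u : ℤ → β, (∀ m, u (m + 1) = σ (u m)) ∧ u 0 = b := by
  refine ⟨fun m => (σ ^ m) b,
    ⟨fun m => by dsimp only; rw [add_comm, zpow_one_add, Perm.mul_apply], rfl⟩, ?_⟩
  rintro u ⟨hu, hu0⟩
  funext m
  induction m using Int.induction_on with
  | zero => exact hu0
  | succ m ih => rw [hu, ih, add_comm, zpow_one_add, Perm.mul_apply]
  | pred m ih =>
    apply σ.injective
    rw [← hu, sub_add_cancel, ih, ← Perm.mul_apply, ← zpow_one_add, add_sub_cancel]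

section Frieze

variable {ι F : Type*} [Fintype ι] [Preorder ι] [DecidableLT ι]
  [Field F] [LinearOrder F] [IsStrictOrderedRing F]

def IsFriezeStep (e : ι → ι → ℕ) (x y : ι → F) : Prop :=
  ∀ i, x i * y i = 1 + (∏ j ∈ univ.filter (fun j => i < j), x j ^ e j i) *
    ∏ j ∈ univ.filter (fun j => j < i), y j ^ e j i

theorem existsUnique_isFriezeStep_right (e : ι → ι → ℕ) (x : {x : ι → F // ∀ i, 0 < x i}) :
    ∃! y : {y : ι → F // ∀ i, 0 < y i}, IsFriezeStep e x.1 y :=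
  existsUnique_subtype_iff.2 <| existsUnique_pos_of_triangular wellFounded_lt e x.2
    fun _ => prod_pos fun j _ => pow_pos (x.2 j) _

theorem existsUnique_isFriezeStep_left (e : ι → ι → ℕ) (y : {y : ι → F // ∀ i, 0 < y i}) :
    ∃! x : {x : ι → F // ∀ i, 0 < x i}, IsFriezeStep e x.1 y := by
  have hswap : ∀ x : ι → F, IsFriezeStep e x y ↔ ∀ i, y.1 i * x i =
      1 + (∏ j ∈ univ.filter (fun j => j < i), y.1 j ^ e j i) *
        ∏ j ∈ univ.filter (fun j => i < j), x j ^ e j i := fun x =>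
    forall_congr' fun i => by rw [mul_comm (x i), mul_comm (∏ j ∈ _, x j ^ _)]
  refine (existsUnique_subtype_iff (q := fun x => IsFriezeStep e x y.1)).2 ?_
  simp_rw [hswap]
  exact existsUnique_pos_of_triangular wellFounded_gt e y.2
    fun _ => prod_pos fun j _ => pow_pos (y.2 j) _

noncomputable def friezeStepEquiv (e : ι → ι → ℕ) : Equiv.Perm {x : ι → F // ∀ i, 0 < x i} :=
  Equiv.ofExistsUnique (fun x y => IsFriezeStep e x.1 y.1)
    (existsUnique_isFriezeStep_right e) (existsUnique_isFriezeStep_left e)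

theorem friezeStepEquiv_apply_eq_iff (e : ι → ι → ℕ) {x y : {x : ι → F // ∀ i, 0 < x i}} :
    friezeStepEquiv e x = y ↔ IsFriezeStep e x.1 y.1 :=
  Equiv.ofExistsUnique_apply_eq_iff _ _

end Frieze

theorem frieze_exists_unique_general {r : ℕ} {F : Type*} [Field F] [LinearOrder F] [IsStrictOrderedRing F]
    (A : Matrix (Fin r) (Fin r) ℤ)
    (s : Fin r → F) (hs : ∀ i, 0 < s i) :
    ∃! f : Fin r → ℤ → F,
      (∀ i m, 0 < f i m) ∧
      (∀ i m, f i m * f i (m + 1) =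
        1 + (∏ j ∈ Finset.univ.filter (fun j => i < j), f j m ^ (-(A j i)).toNat) *
            (∏ j ∈ Finset.univ.filter (fun j => j < i), f j (m + 1) ^ (-(A j i)).toNat)) ∧
      (∀ i, f i 0 = s i) := by
  set σ := friezeStepEquiv (F := F) fun j i : Fin r => (-(A j i)).toNat
  obtain ⟨u, ⟨hu, hu0⟩, huniq⟩ := σ.existsUnique_orbit ⟨s, hs⟩
  refine ⟨fun i m => (u m).1 i,
    ⟨fun i m => (u m).2 i, fun i m => ?_, fun i => congrArg (·.1 i) hu0⟩, ?_⟩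
  · exact (friezeStepEquiv_apply_eq_iff _).1 (hu m).symm i
  · rintro f ⟨hpos, hrel, hf0⟩
    have hfu := huniq (fun m => ⟨fun i => f i m, fun i => hpos i m⟩)
      ⟨fun m => ((friezeStepEquiv_apply_eq_iff _).2 fun i => hrel i m).symm,
        Subtype.ext (funext hf0)⟩
    funext i m
    rw [← hfu]

/-- For a linearly ordered field `F`, positive `F`-valued frieze patterns associated to a
generalised Cartan matrix `A` are in bijection with `r`-tuples of positive elements of `F`. -/
theorem frieze_exists_unique {r : ℕ} (hr : 1 ≤ r) {F : Type*} [Field F] [LinearOrder F] [IsStrictOrderedRing F]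
    (A : Matrix (Fin r) (Fin r) ℤ) (hA : IsGCM A)
    (s : Fin r → F) (hs : ∀ i, 0 < s i) :
    ∃! f : Fin r → ℤ → F,
      (∀ i m, 0 < f i m) ∧
      (∀ i m, f i m * f i (m + 1) =
        1 + (∏ j ∈ Finset.univ.filter (fun j => i < j), f j m ^ (-(A j i)).toNat) *
            (∏ j ∈ Finset.univ.filter (fun j => j < i), f j (m + 1) ^ (-(A j i)).toNat)) ∧
      (∀ i, f i 0 = s i) :=
  frieze_exists_unique_general A s hs
end

section
/- The set of pairs of functions (k₁, k₂) with k₁, k₂ : ℤ → ℤ, k₁(m) ≥ 1 and k₂(m) ≥ 1 for all m ∈ ℤ, and satisfying k₁(m)·k₁(m+1) = 1 + k₂(m) and k₂(m)·k₂(m+1) = 1 + k₁(m+1) for all m ∈ ℤ, has exactly 5 elements. (These are the arithmetic Y-frieze patterns associated to the type A₂ Cartan matrix [[2,−1],[−1,2]].) -/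
private def g : ZMod 5 → ℤ := fun x =>
  if x = 0 then 1 else if x = 1 then 2 else if x = 2 then 2 else if x = 3 then 1 else 3

private lemma g_pos : ∀ x : ZMod 5, 1 ≤ g x := by decide
private lemma g_rel : ∀ x : ZMod 5, g x * g (x + 1) = 1 + g (x + 3) := by decide
private lemma g_rel2 : ∀ x : ZMod 5, g (x + 3) * g (x + 4) = 1 + g (x + 1) := by decide
private lemma g_two : ∀ x : ZMod 5, 2 ≤ g x * g (x + 1) := by decide
private lemma g_R : ∀ x : ZMod 5,
    (g x * g (x + 1) - 1) * (g (x + 1) * g (x + 2) - 1) = 1 + g (x + 1) := by decide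

private def Pj (j : ℤ) : (ℤ → ℤ) × (ℤ → ℤ) :=
  (fun m => g ((m + j : ℤ) : ZMod 5), fun m => g ((m + j + 3 : ℤ) : ZMod 5))

private lemma uniq (a a' : ℤ → ℤ)
    (h1 : ∀ m, 1 ≤ a (m + 1))
    (hp : ∀ m, 2 ≤ a m * a (m + 1))
    (hR : ∀ m, (a m * a (m + 1) - 1) * (a (m + 1) * a (m + 2) - 1) = 1 + a (m + 1))
    (hR' : ∀ m, (a' m * a' (m + 1) - 1) * (a' (m + 1) * a' (m + 2) - 1) = 1 + a' (m + 1))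
    (e0 : a 0 = a' 0) (e1 : a 1 = a' 1) : ∀ m, a m = a' m := by
  have fwd : ∀ m, a m = a' m → a (m + 1) = a' (m + 1) → a (m + 2) = a' (m + 2) := by
    intro m hm hm1
    have h := hR m
    have h' := hR' m
    rw [← hm, ← hm1] at h'
    have hXne : a m * a (m + 1) - 1 ≠ 0 := by have := hp m; omega
    have h2 := mul_left_cancel₀ hXne (h.trans h'.symm)
    have h3 := sub_left_inj.mp h2
    exact mul_left_cancel₀ (by have := h1 m; omega : a (m + 1) ≠ 0) h3
  have bwd : ∀ m, a (m + 1) = a' (m + 1) → a (m + 2) = a' (m + 2) → a m = a' m := by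
    intro m hm1 hm2
    have h := hR m
    have h' := hR' m
    rw [← hm1, ← hm2] at h'
    have hYne : a (m + 1) * a (m + 2) - 1 ≠ 0 := by
      have := hp (m + 1)
      have e : m + 1 + 1 = m + 2 := by ring
      rw [e] at this
      omega
    have h2 := mul_right_cancel₀ hYne (h.trans h'.symm)
    have h3 := sub_left_inj.mp h2
    exact mul_right_cancel₀ (by have := h1 m; omega : a (m + 1) ≠ 0) h3
  have fnat : ∀ n : ℕ, a n = a' n ∧ a ((n : ℤ) + 1) = a' ((n : ℤ) + 1) := by
    intro n
    induction n with
    | zero => exact ⟨by simpa using e0, by simpa using e1⟩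
    | succ n ih =>
      have h2 := fwd n ih.1 ih.2
      have e : ((n : ℤ) + 1) + 1 = (n : ℤ) + 2 := by ring
      constructor
      · push_cast
        exact ih.2
      · push_cast
        rw [e]
        exact h2
  have bnat : ∀ n : ℕ, a (-(n : ℤ)) = a' (-(n : ℤ)) ∧ a (-(n : ℤ) + 1) = a' (-(n : ℤ) + 1) := by
    intro n
    induction n with
    | zero => exact ⟨by simpa using e0, by simpa using e1⟩
    | succ n ih =>
      have e1' : (-(n : ℤ) - 1) + 1 = -(n : ℤ) := by ring
      have e2' : (-(n : ℤ) - 1) + 2 = -(n : ℤ) + 1 := by ring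
      have h2 := bwd (-(n : ℤ) - 1) (by rw [e1']; exact ih.1) (by rw [e2']; exact ih.2)
      have e3 : -((n : ℕ) + 1 : ℤ) = -(n : ℤ) - 1 := by ring
      constructor
      · push_cast
        rw [e3]
        exact h2
      · push_cast
        rw [e3, e1']
        exact ih.1
  intro m
  obtain ⟨n, rfl | rfl⟩ := Int.eq_nat_or_neg m
  · exact (fnat n).1
  · exact (bnat n).1

private lemma Pj_mem (j : ℤ) :
    (∀ m, 1 ≤ (Pj j).1 m) ∧ (∀ m, 1 ≤ (Pj j).2 m) ∧
    (∀ m, (Pj j).1 m * (Pj j).1 (m + 1) = 1 + (Pj j).2 m) ∧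
    (∀ m, (Pj j).2 m * (Pj j).2 (m + 1) = 1 + (Pj j).1 (m + 1)) := by
  refine ⟨fun m => g_pos _, fun m => g_pos _, fun m => ?_, fun m => ?_⟩
  · simp only [Pj]
    have c1 : ((m + 1 + j : ℤ) : ZMod 5) = ((m + j : ℤ) : ZMod 5) + 1 := by push_cast; ring
    have c3 : ((m + j + 3 : ℤ) : ZMod 5) = ((m + j : ℤ) : ZMod 5) + 3 := by push_cast; ring
    rw [c1, c3]
    exact g_rel _
  · simp only [Pj]
    have c1 : ((m + 1 + j : ℤ) : ZMod 5) = ((m + j : ℤ) : ZMod 5) + 1 := by push_cast; ring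
    have c3 : ((m + j + 3 : ℤ) : ZMod 5) = ((m + j : ℤ) : ZMod 5) + 3 := by push_cast; ring
    have c4 : ((m + 1 + j + 3 : ℤ) : ZMod 5) = ((m + j : ℤ) : ZMod 5) + 4 := by push_cast; ring
    rw [c1, c3, c4]
    exact g_rel2 _

private lemma classify (p : (ℤ → ℤ) × (ℤ → ℤ))
    (h1 : ∀ m, 1 ≤ p.1 m) (h2 : ∀ m, 1 ≤ p.2 m)
    (e1 : ∀ m, p.1 m * p.1 (m + 1) = 1 + p.2 m)
    (e2 : ∀ m, p.2 m * p.2 (m + 1) = 1 + p.1 (m + 1))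
    (j : ℤ) (hj0 : p.1 0 = (Pj j).1 0) (hj1 : p.1 1 = (Pj j).1 1) :
    p = Pj j := by
  have hb : ∀ m, p.2 m = p.1 m * p.1 (m + 1) - 1 := fun m => by have := e1 m; omega
  have hprod : ∀ m, 2 ≤ p.1 m * p.1 (m + 1) := fun m => by
    have := e1 m; have := h2 m; omega
  have hR : ∀ m, (p.1 m * p.1 (m + 1) - 1) * (p.1 (m + 1) * p.1 (m + 2) - 1)
      = 1 + p.1 (m + 1) := by
    intro m
    have h := e2 m
    have e : m + 1 + 1 = m + 2 := by ring
    rw [hb m, hb (m + 1), e] at h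
    exact h
  have hR' : ∀ m, ((Pj j).1 m * (Pj j).1 (m + 1) - 1) *
      ((Pj j).1 (m + 1) * (Pj j).1 (m + 2) - 1) = 1 + (Pj j).1 (m + 1) := by
    intro m
    simp only [Pj]
    have c1 : ((m + 1 + j : ℤ) : ZMod 5) = ((m + j : ℤ) : ZMod 5) + 1 := by push_cast; ring
    have c2 : ((m + 2 + j : ℤ) : ZMod 5) = ((m + j : ℤ) : ZMod 5) + 2 := by push_cast; ring
    rw [c1, c2]
    exact g_R _
  have hfst : ∀ m, p.1 m = (Pj j).1 m :=
    uniq p.1 (Pj j).1 (fun m => h1 _) hprod hR hR' hj0 hj1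
  have hsnd : ∀ m, p.2 m = (Pj j).2 m := by
    intro m
    have h := hb m
    rw [hfst m, hfst (m + 1)] at h
    simp only [Pj] at h ⊢
    have c1 : ((m + 1 + j : ℤ) : ZMod 5) = ((m + j : ℤ) : ZMod 5) + 1 := by push_cast; ring
    have c3 : ((m + j + 3 : ℤ) : ZMod 5) = ((m + j : ℤ) : ZMod 5) + 3 := by push_cast; ring
    rw [c1] at h
    rw [c3]
    have := g_rel (((m + j : ℤ) : ZMod 5))
    omega
  exact Prod.ext (funext hfst) (funext hsnd)

private lemma Pj_ne (i j : ℤ)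
    (h : ¬ (g ((0 + i : ℤ) : ZMod 5) = g ((0 + j : ℤ) : ZMod 5) ∧
            g ((1 + i : ℤ) : ZMod 5) = g ((1 + j : ℤ) : ZMod 5))) : Pj i ≠ Pj j := by
  intro he
  exact h ⟨congrFun (congrArg Prod.fst he) 0, congrFun (congrArg Prod.fst he) 1⟩

/-- There are exactly 5 arithmetic Y-frieze patterns of type A₂. -/
theorem card_Yfrieze_A2 :
    Nat.card {p : (ℤ → ℤ) × (ℤ → ℤ) //
      (∀ m, 1 ≤ p.1 m) ∧ (∀ m, 1 ≤ p.2 m) ∧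
      (∀ m, p.1 m * p.1 (m + 1) = 1 + p.2 m) ∧
      (∀ m, p.2 m * p.2 (m + 1) = 1 + p.1 (m + 1))} = 5 := by
  have hset : {p : (ℤ → ℤ) × (ℤ → ℤ) |
      (∀ m, 1 ≤ p.1 m) ∧ (∀ m, 1 ≤ p.2 m) ∧
      (∀ m, p.1 m * p.1 (m + 1) = 1 + p.2 m) ∧
      (∀ m, p.2 m * p.2 (m + 1) = 1 + p.1 (m + 1))}
      = {Pj 0, Pj 1, Pj 2, Pj 3, Pj 4} := by
    ext p
    simp only [Set.mem_setOf_eq, Set.mem_insert_iff, Set.mem_singleton_iff]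
    constructor
    · rintro ⟨h1, h2, e1, e2⟩
      have hb : ∀ m, p.2 m = p.1 m * p.1 (m + 1) - 1 := fun m => by have := e1 m; omega
      have hprod : ∀ m, 2 ≤ p.1 m * p.1 (m + 1) := fun m => by
        have := e1 m; have := h2 m; omega
      have hR : ∀ m, (p.1 m * p.1 (m + 1) - 1) * (p.1 (m + 1) * p.1 (m + 2) - 1)
          = 1 + p.1 (m + 1) := by
        intro m
        have h := e2 m
        have e : m + 1 + 1 = m + 2 := by ring
        rw [hb m, hb (m + 1), e] at h
        exact h
      have hA := hR (-1)
      have hB := hR 0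
      norm_num at hA hB
      have hu : 1 ≤ p.1 (-1) := h1 _
      have hv : 1 ≤ p.1 0 := h1 _
      have hw : 1 ≤ p.1 1 := h1 _
      have ht : 1 ≤ p.1 2 := h1 _
      have hX : 2 ≤ p.1 (-1) * p.1 0 := by have := hprod (-1); norm_num at this; exact this
      have hY : 2 ≤ p.1 0 * p.1 1 := by have := hprod 0; norm_num at this; exact this
      have hZ : 2 ≤ p.1 1 * p.1 2 := by have := hprod 1; norm_num at this; exact this
      have bound1 : p.1 0 * p.1 1 - 1 ≤ 1 + p.1 0 := by nlinarith
      have bound2 : p.1 0 * p.1 1 - 1 ≤ 1 + p.1 1 := by nlinarith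
      have hv3 : p.1 0 ≤ 3 := by nlinarith
      have hw3 : p.1 1 ≤ 3 := by nlinarith
      have hvc : p.1 0 = 1 ∨ p.1 0 = 2 ∨ p.1 0 = 3 := by omega
      have hwc : p.1 1 = 1 ∨ p.1 1 = 2 ∨ p.1 1 = 3 := by omega
      rcases hvc with h | h | h <;> rcases hwc with h' | h' | h'
      · exfalso; rw [h, h'] at hY; omega
      · exact Or.inl (classify p h1 h2 e1 e2 0 (by rw [h]; decide) (by rw [h']; decide))
      · exact Or.inr (Or.inr (Or.inr (Or.inl
          (classify p h1 h2 e1 e2 3 (by rw [h]; decide) (by rw [h']; decide)))))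
      · exact Or.inr (Or.inr (Or.inl
          (classify p h1 h2 e1 e2 2 (by rw [h]; decide) (by rw [h']; decide))))
      · exact Or.inr (Or.inl
          (classify p h1 h2 e1 e2 1 (by rw [h]; decide) (by rw [h']; decide)))
      · exfalso; rw [h, h'] at bound1; omega
      · exact Or.inr (Or.inr (Or.inr (Or.inr
          (classify p h1 h2 e1 e2 4 (by rw [h]; decide) (by rw [h']; decide)))))
      · exfalso; rw [h, h'] at bound2; omega
      · exfalso; rw [h, h'] at bound1; omega
    · rintro (rfl | rfl | rfl | rfl | rfl) <;> exact Pj_mem _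
  have hcard : Nat.card ({p : (ℤ → ℤ) × (ℤ → ℤ) |
      (∀ m, 1 ≤ p.1 m) ∧ (∀ m, 1 ≤ p.2 m) ∧
      (∀ m, p.1 m * p.1 (m + 1) = 1 + p.2 m) ∧
      (∀ m, p.2 m * p.2 (m + 1) = 1 + p.1 (m + 1))} : Set _) = 5 := by
    rw [Nat.card_coe_set_eq, hset]
    rw [Set.ncard_insert_of_notMem (by
      simp only [Set.mem_insert_iff, Set.mem_singleton_iff]
      push_neg
      exact ⟨Pj_ne 0 1 (by decide), Pj_ne 0 2 (by decide), Pj_ne 0 3 (by decide),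
        Pj_ne 0 4 (by decide)⟩)]
    rw [Set.ncard_insert_of_notMem (by
      simp only [Set.mem_insert_iff, Set.mem_singleton_iff]
      push_neg
      exact ⟨Pj_ne 1 2 (by decide), Pj_ne 1 3 (by decide), Pj_ne 1 4 (by decide)⟩)]
    rw [Set.ncard_insert_of_notMem (by
      simp only [Set.mem_insert_iff, Set.mem_singleton_iff]
      push_neg
      exact ⟨Pj_ne 2 3 (by decide), Pj_ne 2 4 (by decide)⟩)]
    rw [Set.ncard_insert_of_notMem (by
      simp only [Set.mem_singleton_iff]
      exact Pj_ne 3 4 (by decide))]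
    rw [Set.ncard_singleton]
  exact hcard
end

section
/- The set of pairs of functions (k₁, k₂) with k₁, k₂ : ℤ → ℤ, k₁(m) ≥ 1 and k₂(m) ≥ 1 for all m ∈ ℤ, and satisfying k₁(m)·k₁(m+1) = (1 + k₂(m))² and k₂(m)·k₂(m+1) = 1 + k₁(m+1) for all m ∈ ℤ, has exactly 10 elements. (These are the arithmetic Y-frieze patterns associated to the type C₂ Cartan matrix [[2,−1],[−2,2]].) -/
/-!
Put `s = k₂`. The second relation says `k₁ (m + 1) = s m * s (m + 1) - 1`, and substituting this
into the first relation and dividing by `s (m + 1)` turns it into `a * b * c = a + b + c + 2` for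
every three consecutive values `a, b, c` of `s`. This equation is invariant under rotating
`(a, b, c)` and determines `c` from `a` and `b` (as `a * b ≠ 1`), so `s` is `3`-periodic, and
friezes correspond to the ordered positive solutions of `a * b * c = a + b + c + 2`. Since
`c * (a * b - 1) = a + b + 2` forces every entry to be at most `5`, these are the permutations of
`(1, 2, 5)`, `(1, 3, 3)` and `(2, 2, 2)`: `6 + 3 + 1 = 10` of them.
-/

open Function

def IsArithYFrieze (b c : ℕ) (p : (ℤ → ℤ) × (ℤ → ℤ)) : Prop :=
  (∀ m, 1 ≤ p.1 m) ∧ (∀ m, 1 ≤ p.2 m) ∧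
  (∀ m, p.1 m * p.1 (m + 1) = (1 + p.2 m) ^ c) ∧
  (∀ m, p.2 m * p.2 (m + 1) = (1 + p.1 (m + 1)) ^ b)

def IsC2Triple (a b c : ℤ) : Prop :=
  1 ≤ a ∧ 1 ≤ b ∧ 1 ≤ c ∧ a * b * c = a + b + c + 2

def c2Triples : Finset (ℤ × ℤ × ℤ) :=
  {(1, 2, 5), (1, 5, 2), (2, 1, 5), (2, 5, 1), (5, 1, 2), (5, 2, 1),
    (1, 3, 3), (3, 1, 3), (3, 3, 1), (2, 2, 2)}

namespace IsC2Triple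

variable {a b c d : ℤ}

theorem rotate (h : IsC2Triple a b c) : IsC2Triple b c a := by
  obtain ⟨ha, hb, hc, h⟩ := h
  exact ⟨hb, hc, ha, by linear_combination h⟩

theorem two_le_mul (h : IsC2Triple a b c) : 2 ≤ a * b := by
  obtain ⟨ha, hb, -, h⟩ := h
  by_contra! hab
  obtain rfl : a = 1 := by nlinarith
  obtain rfl : b = 1 := by nlinarith
  linarith

theorem right_unique (h : IsC2Triple a b c) (h' : IsC2Triple a b d) : c = d := by
  have hab : a * b - 1 ≠ 0 := by linarith [h.two_le_mul]
  exact mul_left_cancel₀ hab (by linear_combination h.2.2.2 - h'.2.2.2)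

theorem le_five (h : IsC2Triple a b c) : c ≤ 5 := by
  have hab := h.two_le_mul
  obtain ⟨ha, hb, -, h⟩ := h
  nlinarith [mul_nonneg (sub_nonneg.2 ha) (sub_nonneg.2 hb)]

end IsC2Triple

theorem isC2Triple_iff_mem_c2Triples {a b c : ℤ} : IsC2Triple a b c ↔ (a, b, c) ∈ c2Triples := by
  refine ⟨fun h => ?_, fun h => ?_⟩
  · have hc := h.le_five
    have ha := h.rotate.le_five
    have hb := h.rotate.rotate.le_five
    obtain ⟨ha1, hb1, hc1, h⟩ := h
    interval_cases a <;> interval_cases b <;> interval_cases c <;> first | omega | decide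
  · simp only [c2Triples, Finset.mem_insert, Finset.mem_singleton, Prod.mk.injEq] at h
    rcases h with h | h | h | h | h | h | h | h | h | h <;>
      obtain ⟨rfl, rfl, rfl⟩ := h <;> norm_num [IsC2Triple]

theorem card_isC2Triple : Nat.card {t : ℤ × ℤ × ℤ // IsC2Triple t.1 t.2.1 t.2.2} = 10 := by
  rw [Nat.card_congr (Equiv.subtypeEquivRight (q := (· ∈ c2Triples))
      fun _ => isC2Triple_iff_mem_c2Triples), Nat.card_eq_fintype_card, Fintype.card_coe]
  rfl

def IsC2Seq (s : ℤ → ℤ) : Prop :=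
  ∀ m, IsC2Triple (s m) (s (m + 1)) (s (m + 2))

theorem IsC2Seq.periodic {s : ℤ → ℤ} (hs : IsC2Seq s) : Periodic s 3 := fun m => by
  have h : IsC2Triple (s (m + 1)) (s (m + 2)) (s (m + 3)) := by
    convert hs (m + 1) using 2 <;> ring
  exact ((hs m).rotate.right_unique h).symm

theorem Function.Periodic.eq_of_apply_zero_one_two {α : Type*} [AddGroup α] {s s' : ℤ → α}
    (hs : Periodic s 3) (hs' : Periodic s' 3) (h0 : s 0 = s' 0) (h1 : s 1 = s' 1)
    (h2 : s 2 = s' 2) : s = s' := by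
  funext m
  obtain ⟨r, hr, hm⟩ := (hs.sub hs').exists_mem_Ico₀ (by norm_num) m
  rw [← sub_eq_zero, ← Pi.sub_apply, hm, Pi.sub_apply, sub_eq_zero]
  obtain rfl | rfl | rfl : r = 0 ∨ r = 1 ∨ r = 2 := by simp only [Set.mem_Ico] at hr; omega
  exacts [h0, h1, h2]

theorem isC2Seq_of_periodic {s : ℤ → ℤ} (hs : Periodic s 3) (h : IsC2Triple (s 0) (s 1) (s 2)) :
    IsC2Seq s := by
  have hshift : Periodic (fun m => (s m, s (m + 1), s (m + 2))) 3 := fun m => by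
    simp only [add_right_comm _ (3 : ℤ), hs _]
  intro m
  obtain ⟨r, hr, hm⟩ := hshift.exists_mem_Ico₀ (by norm_num) m
  simp only [Prod.mk.injEq] at hm
  rw [hm.1, hm.2.1, hm.2.2]
  obtain rfl | rfl | rfl : r = 0 ∨ r = 1 ∨ r = 2 := by simp only [Set.mem_Ico] at hr; omega
  · exact h
  · simpa [← hs 0] using h.rotate
  · simpa [← hs 0, ← hs 1] using h.rotate.rotate

def cyclicExtension (t : ℤ × ℤ × ℤ) (m : ℤ) : ℤ :=
  if m % 3 = 0 then t.1 else if m % 3 = 1 then t.2.1 else t.2.2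

theorem cyclicExtension_periodic (t : ℤ × ℤ × ℤ) : Periodic (cyclicExtension t) 3 := fun m => by
  simp [cyclicExtension]

theorem isArithYFrieze_one_two_iff {p : (ℤ → ℤ) × (ℤ → ℤ)} :
    IsArithYFrieze 1 2 p ↔ IsC2Seq p.2 ∧ ∀ m, p.1 (m + 1) = p.2 m * p.2 (m + 1) - 1 := by
  constructor
  · rintro ⟨-, h₂, hk₁, hk₂⟩
    have hfst : ∀ m, p.1 (m + 1) = p.2 m * p.2 (m + 1) - 1 := fun m => by
      linear_combination -(hk₂ m)
    refine ⟨fun m => ⟨h₂ m, h₂ (m + 1), h₂ (m + 2), ?_⟩, hfst⟩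
    have h := hk₁ (m + 1)
    have h' := hfst (m + 1)
    rw [add_assoc, one_add_one_eq_two] at h h'
    rw [hfst, h'] at h
    have hne : p.2 (m + 1) ≠ 0 := by linarith [h₂ (m + 1)]
    exact mul_left_cancel₀ hne (by linear_combination h)
  · rintro ⟨hs, hfst⟩
    refine ⟨fun m => ?_, fun m => (hs m).1, fun m => ?_, fun m => ?_⟩
    · obtain ⟨n, rfl⟩ : ∃ n, m = n + 1 := ⟨m - 1, by ring⟩
      linarith [hfst n, (hs n).two_le_mul]
    · obtain ⟨n, rfl⟩ : ∃ n, m = n + 1 := ⟨m - 1, by ring⟩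
      have h := hfst (n + 1)
      rw [add_assoc, one_add_one_eq_two] at h ⊢
      rw [hfst, h]
      linear_combination p.2 (n + 1) * (hs n).2.2.2
    · rw [hfst, pow_one]
      ring

def arithYFriezeOneTwoEquivC2Seq : {p // IsArithYFrieze 1 2 p} ≃ {s // IsC2Seq s} where
  toFun p := ⟨p.1.2, (isArithYFrieze_one_two_iff.1 p.2).1⟩
  invFun s := ⟨(fun m => s.1 (m - 1) * s.1 m - 1, s.1),
    isArithYFrieze_one_two_iff.2 ⟨s.2, fun m => by simp only [add_sub_cancel_right]⟩⟩
  left_inv p := by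
    refine Subtype.ext (Prod.ext (funext fun m => ?_) rfl)
    obtain ⟨n, rfl⟩ : ∃ n, m = n + 1 := ⟨m - 1, by ring⟩
    simp only [add_sub_cancel_right, (isArithYFrieze_one_two_iff.1 p.2).2 n]
  right_inv _ := rfl

def c2SeqEquivC2Triple : {s // IsC2Seq s} ≃ {t : ℤ × ℤ × ℤ // IsC2Triple t.1 t.2.1 t.2.2} where
  toFun s := ⟨(s.1 0, s.1 1, s.1 2), s.2 0⟩
  invFun t := ⟨cyclicExtension t.1, isC2Seq_of_periodic (cyclicExtension_periodic _) t.2⟩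
  left_inv s := Subtype.ext <|
    (cyclicExtension_periodic _).eq_of_apply_zero_one_two s.2.periodic rfl rfl rfl
  right_inv _ := rfl

/-- There are exactly 10 arithmetic Y-frieze patterns of type C₂. -/
theorem card_Yfrieze_C2 :
    Nat.card {p : (ℤ → ℤ) × (ℤ → ℤ) //
      (∀ m, 1 ≤ p.1 m) ∧ (∀ m, 1 ≤ p.2 m) ∧
      (∀ m, p.1 m * p.1 (m + 1) = (1 + p.2 m) ^ 2) ∧
      (∀ m, p.2 m * p.2 (m + 1) = 1 + p.1 (m + 1))} = 10 := by
  have hC2 : Nat.card {p // IsArithYFrieze 1 2 p} = 10 := by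
    rw [Nat.card_congr (arithYFriezeOneTwoEquivC2Seq.trans c2SeqEquivC2Triple), card_isC2Triple]
  simpa only [IsArithYFrieze, pow_one] using hC2
end

section
/- The set of pairs of functions (k₁, k₂) with k₁, k₂ : ℤ → ℤ, k₁(m) ≥ 1 and k₂(m) ≥ 1 for all m ∈ ℤ, and satisfying k₁(m)·k₁(m+1) = (1 + k₂(m))³ and k₂(m)·k₂(m+1) = 1 + k₁(m+1) for all m ∈ ℤ, has exactly 21 elements. (These are the arithmetic Y-frieze patterns associated to the type G₂ Cartan matrix [[2,−1],[−3,2]].) -/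
set_option maxHeartbeats 1600000

lemma keyG2 (b d f h : ℤ) (hd : 1 ≤ d) (hf : 1 ≤ f)
    (H3 : (b*d-1)*(d*f-1) = (1+d)^3) (H5 : (d*f-1)*(f*h-1) = (1+f)^3) :
    (1+d)*(1+h) = (1+b)*(1+f) := by
  have hcube : 0 < (1+d)^3 := by positivity
  have hu : 1 ≤ d*f - 1 := by
    have h0 : 0 ≤ d*f - 1 := by nlinarith
    rcases h0.lt_or_eq with hlt | heq
    · omega
    · exfalso
      have hz : (1+d)^3 = 0 := by rw [← H3, ← heq]; ring
      omega
  have hne : d*f*(d*f-1) ≠ 0 := by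
    have : 0 < d*f*(d*f-1) := by positivity
    omega
  have H : ((1+d)*(1+h)) * (d*f*(d*f-1)) = ((1+b)*(1+f)) * (d*f*(d*f-1)) := by
    linear_combination ((1+d)*d)*H5 - ((1+f)*f)*H3
  exact mul_right_cancel₀ hne H

lemma classifyG2 (b d f h : ℤ) (hb : 1 ≤ b) (hd : 1 ≤ d) (hf : 1 ≤ f) (hh : 1 ≤ h)
    (hdb : d ≤ b) (hdf : d ≤ f)
    (Ed : (b*d-1)*(d*f-1) = (1+d)*((1+d)*(1+d)))
    (Eb : (h*b-1)*(b*d-1) = (1+b)*((1+b)*(1+b))) :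
    (b=2∧d=1∧f=9∧h=14) ∨ (b=3∧d=1∧f=5∧h=11) ∨ (b=5∧d=1∧f=3∧h=11) ∨ (b=9∧d=1∧f=2∧h=14) ∨
    (b=2∧d=2∧f=5∧h=5) ∨ (b=5∧d=2∧f=2∧h=5) ∨ (b=3∧d=3∧f=3∧h=3) := by
  have hcube : 0 < (1+d)*((1+d)*(1+d)) := by positivity
  have h1 : 1 ≤ d*f - 1 := by
    have h0 : 0 ≤ d*f - 1 := by nlinarith
    rcases h0.lt_or_eq with hlt | heq
    · omega
    · exfalso
      have hz : (1+d)*((1+d)*(1+d)) = 0 := by rw [← Ed, ← heq]; ring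
      omega
  have h2 : 1 ≤ b*d - 1 := by
    have h0 : 0 ≤ b*d - 1 := by nlinarith
    rcases h0.lt_or_eq with hlt | heq
    · omega
    · exfalso
      have hz : (1+d)*((1+d)*(1+d)) = 0 := by rw [← Ed, ← heq]; ring
      omega
  have hd3 : d ≤ 3 := by
    nlinarith [mul_le_mul (by nlinarith : d*d-1 ≤ b*d-1) (by nlinarith : d*d-1 ≤ d*f-1)
      (by nlinarith : (0:ℤ) ≤ d*d-1) (by omega : (0:ℤ) ≤ b*d-1), sq_nonneg (d+1), sq_nonneg d]
  have hbd : b*d - 1 ≤ (1+d)*((1+d)*(1+d)) := by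
    nlinarith [mul_le_mul_of_nonneg_left h1 (by omega : (0:ℤ) ≤ b*d-1)]
  interval_cases d
  · have hb' : b ≤ 9 := by omega
    interval_cases b <;> omega
  · have hb' : b ≤ 14 := by omega
    interval_cases b <;> omega
  · have hb' : b ≤ 22 := by omega
    interval_cases b <;> omega

def per4 (x0 x1 x2 x3 : ℤ) : ℤ → ℤ := fun m =>
  if m % 4 = 0 then x0 else if m % 4 = 1 then x1 else if m % 4 = 2 then x2 else x3

lemma mkSol (a c e g b d f h : ℤ)
    (ha : 1 ≤ a) (hc : 1 ≤ c) (he : 1 ≤ e) (hg : 1 ≤ g)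
    (hb : 1 ≤ b) (hd : 1 ≤ d) (hf : 1 ≤ f) (hh : 1 ≤ h)
    (E1 : a*c = (1+b)^3) (E2 : c*e = (1+d)^3) (E3 : e*g = (1+f)^3) (E4 : g*a = (1+h)^3)
    (F1 : b*d = 1+c) (F2 : d*f = 1+e) (F3 : f*h = 1+g) (F4 : h*b = 1+a) :
    (∀ m, 1 ≤ per4 a c e g m) ∧ (∀ m, 1 ≤ per4 b d f h m) ∧
    (∀ m, per4 a c e g m * per4 a c e g (m+1) = (1 + per4 b d f h m)^3) ∧
    (∀ m, per4 b d f h m * per4 b d f h (m+1) = 1 + per4 a c e g (m+1)) := by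
  refine ⟨fun m => ?_, fun m => ?_, fun m => ?_, fun m => ?_⟩ <;>
  · have h4 : m % 4 = 0 ∨ m % 4 = 1 ∨ m % 4 = 2 ∨ m % 4 = 3 := by omega
    rcases h4 with hm | hm | hm | hm <;>
    · have hm' : (m+1) % 4 = (m % 4 + 1) % 4 := by omega
      simp only [per4, hm, hm'] <;> norm_num <;> assumption

lemma periodicG2 (k1 k2 : ℤ → ℤ) (p1 : ∀ m, 1 ≤ k1 m) (p2 : ∀ m, 1 ≤ k2 m)
    (q1 : ∀ m, k1 m * k1 (m+1) = (1 + k2 m)^3) (q2 : ∀ m, k2 m * k2 (m+1) = 1 + k1 (m+1)) :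
    ∀ m, k1 (m+4) = k1 m ∧ k2 (m+4) = k2 m := by
  intro m
  have e1 : k1 m * k1 (m+1) = (1 + k2 m)^3 := q1 m
  have e2 : k1 (m+1) * k1 (m+2) = (1 + k2 (m+1))^3 := by
    have := q1 (m+1); rwa [show m+1+1 = m+2 by ring] at this
  have e3 : k1 (m+2) * k1 (m+3) = (1 + k2 (m+2))^3 := by
    have := q1 (m+2); rwa [show m+2+1 = m+3 by ring] at this
  have e4 : k1 (m+3) * k1 (m+4) = (1 + k2 (m+3))^3 := by
    have := q1 (m+3); rwa [show m+3+1 = m+4 by ring] at this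
  have f1 : k2 m * k2 (m+1) = 1 + k1 (m+1) := q2 m
  have f2 : k2 (m+1) * k2 (m+2) = 1 + k1 (m+2) := by
    have := q2 (m+1); rwa [show m+1+1 = m+2 by ring] at this
  have f3 : k2 (m+2) * k2 (m+3) = 1 + k1 (m+3) := by
    have := q2 (m+2); rwa [show m+2+1 = m+3 by ring] at this
  have f4 : k2 (m+3) * k2 (m+4) = 1 + k1 (m+4) := by
    have := q2 (m+3); rwa [show m+3+1 = m+4 by ring] at this
  set a := k1 m; set b := k2 m; set c := k1 (m+1); set d := k2 (m+1)
  set e := k1 (m+2); set f := k2 (m+2); set g := k1 (m+3); set h := k2 (m+3)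
  set A := k1 (m+4); set B := k2 (m+4)
  have hc : c = b*d - 1 := by omega
  have he : e = d*f - 1 := by omega
  have hg : g = f*h - 1 := by omega
  have hAe : A = h*B - 1 := by omega
  have H3 : (b*d-1)*(d*f-1) = (1+d)^3 := by rw [← hc, ← he]; exact e2
  have H5 : (d*f-1)*(f*h-1) = (1+f)^3 := by rw [← he, ← hg]; exact e3
  have H7 : (f*h-1)*(h*B-1) = (1+h)^3 := by rw [← hg, ← hAe]; exact e4
  have K1 := keyG2 b d f h (p2 (m+1)) (p2 (m+2)) H3 H5
  have K2 := keyG2 d f h B (p2 (m+2)) (p2 (m+3)) H5 H7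
  have hB : B = b := by
    have hfne : (1+f : ℤ) ≠ 0 := by have := p2 (m+2); omega
    have hBb : (1+f)*(1+B) = (1+f)*(1+b) := by linear_combination K2 + K1
    have := mul_left_cancel₀ hfne hBb
    omega
  have hA : A = a := by
    have hne : c*e*g ≠ 0 := by
      have c1 := p1 (m+1); have c2 := p1 (m+2); have c3 := p1 (m+3)
      positivity
    apply mul_right_cancel₀ hne
    linear_combination (c*e)*e4 + (1+h)^3*e2 - (e*g)*e1 - (1+b)^3*e3 +
      (((1+d)*(1+h))^2 + (1+d)*(1+h)*((1+b)*(1+f)) + ((1+b)*(1+f))^2)*K1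
  exact ⟨hA, hB⟩

lemma agreeG2 (k1 k2 l1 l2 : ℤ → ℤ)
    (p1 : ∀ m, 1 ≤ k1 m) (p2 : ∀ m, 1 ≤ k2 m)
    (q1 : ∀ m, k1 m * k1 (m+1) = (1 + k2 m)^3) (q2 : ∀ m, k2 m * k2 (m+1) = 1 + k1 (m+1))
    (p1' : ∀ m, 1 ≤ l1 m) (p2' : ∀ m, 1 ≤ l2 m)
    (q1' : ∀ m, l1 m * l1 (m+1) = (1 + l2 m)^3) (q2' : ∀ m, l2 m * l2 (m+1) = 1 + l1 (m+1))
    (h0 : k1 0 = l1 0) (h0' : k2 0 = l2 0) : k1 = l1 ∧ k2 = l2 := by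
  have Hn : ∀ n : ℕ, k1 (n:ℤ) = l1 (n:ℤ) ∧ k2 (n:ℤ) = l2 (n:ℤ) := by
    intro n
    induction n with
    | zero => exact ⟨by simpa using h0, by simpa using h0'⟩
    | succ n ih =>
      obtain ⟨i1, i2⟩ := ih
      have hne1 : k1 (n:ℤ) ≠ 0 := by have := p1 (n:ℤ); omega
      have t1 : k1 ((n:ℤ)+1) = l1 ((n:ℤ)+1) := by
        apply mul_left_cancel₀ hne1
        rw [q1 (n:ℤ), i2, ← q1' (n:ℤ), ← i1]
      have hne2 : k2 (n:ℤ) ≠ 0 := by have := p2 (n:ℤ); omega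
      have t2 : k2 ((n:ℤ)+1) = l2 ((n:ℤ)+1) := by
        apply mul_left_cancel₀ hne2
        rw [q2 (n:ℤ), t1, ← q2' (n:ℤ), ← i2]
      constructor
      · push_cast; exact t1
      · push_cast; exact t2
  have Hs : ∀ j : ℕ, ∀ m : ℤ, k1 (m + 4*(j:ℤ)) = k1 m ∧ k2 (m + 4*(j:ℤ)) = k2 m := by
    intro j
    induction j with
    | zero => intro m; norm_num
    | succ j ih =>
      intro m
      have P := periodicG2 k1 k2 p1 p2 q1 q2 (m + 4*(j:ℤ))
      have hidx : m + 4*((j:ℕ)+1:ℤ) = (m + 4*(j:ℤ)) + 4 := by ring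
      constructor
      · push_cast
        rw [show m + 4*((j:ℤ)+1) = (m + 4*(j:ℤ)) + 4 from by ring, P.1]
        exact (ih m).1
      · push_cast
        rw [show m + 4*((j:ℤ)+1) = (m + 4*(j:ℤ)) + 4 from by ring, P.2]
        exact (ih m).2
  have Hs' : ∀ j : ℕ, ∀ m : ℤ, l1 (m + 4*(j:ℤ)) = l1 m ∧ l2 (m + 4*(j:ℤ)) = l2 m := by
    intro j
    induction j with
    | zero => intro m; norm_num
    | succ j ih =>
      intro m
      have P := periodicG2 l1 l2 p1' p2' q1' q2' (m + 4*(j:ℤ))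
      constructor
      · push_cast
        rw [show m + 4*((j:ℤ)+1) = (m + 4*(j:ℤ)) + 4 from by ring, P.1]
        exact (ih m).1
      · push_cast
        rw [show m + 4*((j:ℤ)+1) = (m + 4*(j:ℤ)) + 4 from by ring, P.2]
        exact (ih m).2
  have main : ∀ m : ℤ, k1 m = l1 m ∧ k2 m = l2 m := by
    intro m
    have hjm : 0 ≤ m + 4*(m.natAbs:ℤ) := by omega
    have e1 : m + 4*(m.natAbs:ℤ) = (((m + 4*(m.natAbs:ℤ)).toNat : ℕ) : ℤ) :=
      (Int.toNat_of_nonneg hjm).symm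
    have hk := Hs m.natAbs m
    have hl := Hs' m.natAbs m
    have hn := Hn ((m + 4*(m.natAbs:ℤ)).toNat)
    rw [← e1] at hn
    exact ⟨by rw [← hk.1, hn.1, hl.1], by rw [← hk.2, hn.2, hl.2]⟩
  exact ⟨funext fun m => (main m).1, funext fun m => (main m).2⟩

lemma memG2 (k1 k2 : ℤ → ℤ) (p1 : ∀ m, 1 ≤ k1 m) (p2 : ∀ m, 1 ≤ k2 m)
    (q1 : ∀ m, k1 m * k1 (m+1) = (1 + k2 m)^3) (q2 : ∀ m, k2 m * k2 (m+1) = 1 + k1 (m+1)) :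
    (k1 0 = 1 ∧ k2 0 = 1) ∨
    (k1 0 = 1 ∧ k2 0 = 2) ∨
    (k1 0 = 2 ∧ k2 0 = 1) ∨
    (k1 0 = 2 ∧ k2 0 = 3) ∨
    (k1 0 = 3 ∧ k2 0 = 2) ∨
    (k1 0 = 4 ∧ k2 0 = 1) ∨
    (k1 0 = 4 ∧ k2 0 = 5) ∨
    (k1 0 = 8 ∧ k2 0 = 1) ∨
    (k1 0 = 8 ∧ k2 0 = 3) ∨
    (k1 0 = 8 ∧ k2 0 = 9) ∨
    (k1 0 = 9 ∧ k2 0 = 2) ∨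
    (k1 0 = 9 ∧ k2 0 = 5) ∨
    (k1 0 = 24 ∧ k2 0 = 5) ∨
    (k1 0 = 27 ∧ k2 0 = 2) ∨
    (k1 0 = 27 ∧ k2 0 = 14) ∨
    (k1 0 = 32 ∧ k2 0 = 3) ∨
    (k1 0 = 32 ∧ k2 0 = 11) ∨
    (k1 0 = 54 ∧ k2 0 = 5) ∨
    (k1 0 = 54 ∧ k2 0 = 11) ∨
    (k1 0 = 125 ∧ k2 0 = 9) ∨
    (k1 0 = 125 ∧ k2 0 = 14) := by
  obtain ⟨P1, P2⟩ : k1 4 = k1 0 ∧ k2 4 = k2 0 := by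
    have := periodicG2 k1 k2 p1 p2 q1 q2 0; norm_num at this; exact this
  have e1 : k1 0 * k1 1 = (1 + k2 0)^3 := by have := q1 0; norm_num at this; exact this
  have e2 : k1 1 * k1 2 = (1 + k2 1)^3 := by have := q1 1; norm_num at this; exact this
  have e3 : k1 2 * k1 3 = (1 + k2 2)^3 := by have := q1 2; norm_num at this; exact this
  have e4 : k1 3 * k1 0 = (1 + k2 3)^3 := by
    have := q1 3; norm_num at this; rwa [P1] at this
  have f1 : k2 0 * k2 1 = 1 + k1 1 := by have := q2 0; norm_num at this; exact this
  have f2 : k2 1 * k2 2 = 1 + k1 2 := by have := q2 1; norm_num at this; exact this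
  have f3 : k2 2 * k2 3 = 1 + k1 3 := by have := q2 2; norm_num at this; exact this
  have haEq : k2 3 * k2 0 = 1 + k1 0 := by
    have := q2 3; norm_num at this; rwa [P2, P1] at this
  have hc : k1 1 = k2 0 * k2 1 - 1 := by omega
  have he : k1 2 = k2 1 * k2 2 - 1 := by omega
  have hg : k1 3 = k2 2 * k2 3 - 1 := by omega
  have ha : k1 0 = k2 3 * k2 0 - 1 := by omega
  have Ed : (k2 0 * k2 1 - 1)*(k2 1 * k2 2 - 1) = (1 + k2 1)*((1 + k2 1)*(1 + k2 1)) := by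
    rw [← hc, ← he]; linear_combination e2
  have Ef : (k2 1 * k2 2 - 1)*(k2 2 * k2 3 - 1) = (1 + k2 2)*((1 + k2 2)*(1 + k2 2)) := by
    rw [← he, ← hg]; linear_combination e3
  have Eh : (k2 2 * k2 3 - 1)*(k2 3 * k2 0 - 1) = (1 + k2 3)*((1 + k2 3)*(1 + k2 3)) := by
    rw [← hg, ← ha]; linear_combination e4
  have Eb : (k2 3 * k2 0 - 1)*(k2 0 * k2 1 - 1) = (1 + k2 0)*((1 + k2 0)*(1 + k2 0)) := by
    rw [← ha, ← hc]; linear_combination e1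
  have b0 := p2 0; have b1 := p2 1; have b2 := p2 2; have b3 := p2 3
  have hmin : (k2 1 ≤ k2 0 ∧ k2 1 ≤ k2 2) ∨ (k2 2 ≤ k2 1 ∧ k2 2 ≤ k2 3) ∨
      (k2 3 ≤ k2 2 ∧ k2 3 ≤ k2 0) ∨ (k2 0 ≤ k2 3 ∧ k2 0 ≤ k2 1) := by omega
  rcases hmin with ⟨m1, m2⟩ | ⟨m1, m2⟩ | ⟨m1, m2⟩ | ⟨m1, m2⟩
  · have cls := classifyG2 (k2 0) (k2 1) (k2 2) (k2 3) b0 b1 b2 b3 m1 m2 Ed Eb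
    obtain A|A|A|A|A|A|A := cls
    · obtain ⟨x1,x2,x3,x4⟩ := A
      rw [x4, x1] at haEq
      exact Or.inr (Or.inr (Or.inr (Or.inr (Or.inr (Or.inr (Or.inr (Or.inr (Or.inr (Or.inr (Or.inr (Or.inr (Or.inr (Or.inl (⟨by omega, x1⟩))))))))))))))
    · obtain ⟨x1,x2,x3,x4⟩ := A
      rw [x4, x1] at haEq
      exact Or.inr (Or.inr (Or.inr (Or.inr (Or.inr (Or.inr (Or.inr (Or.inr (Or.inr (Or.inr (Or.inr (Or.inr (Or.inr (Or.inr (Or.inr (Or.inl (⟨by omega, x1⟩))))))))))))))))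
    · obtain ⟨x1,x2,x3,x4⟩ := A
      rw [x4, x1] at haEq
      exact Or.inr (Or.inr (Or.inr (Or.inr (Or.inr (Or.inr (Or.inr (Or.inr (Or.inr (Or.inr (Or.inr (Or.inr (Or.inr (Or.inr (Or.inr (Or.inr (Or.inr (Or.inl (⟨by omega, x1⟩))))))))))))))))))
    · obtain ⟨x1,x2,x3,x4⟩ := A
      rw [x4, x1] at haEq
      exact Or.inr (Or.inr (Or.inr (Or.inr (Or.inr (Or.inr (Or.inr (Or.inr (Or.inr (Or.inr (Or.inr (Or.inr (Or.inr (Or.inr (Or.inr (Or.inr (Or.inr (Or.inr (Or.inr (Or.inl (⟨by omega, x1⟩))))))))))))))))))))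
    · obtain ⟨x1,x2,x3,x4⟩ := A
      rw [x4, x1] at haEq
      exact Or.inr (Or.inr (Or.inr (Or.inr (Or.inr (Or.inr (Or.inr (Or.inr (Or.inr (Or.inr (Or.inl (⟨by omega, x1⟩)))))))))))
    · obtain ⟨x1,x2,x3,x4⟩ := A
      rw [x4, x1] at haEq
      exact Or.inr (Or.inr (Or.inr (Or.inr (Or.inr (Or.inr (Or.inr (Or.inr (Or.inr (Or.inr (Or.inr (Or.inr (Or.inl (⟨by omega, x1⟩)))))))))))))
    · obtain ⟨x1,x2,x3,x4⟩ := A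
      rw [x4, x1] at haEq
      exact Or.inr (Or.inr (Or.inr (Or.inr (Or.inr (Or.inr (Or.inr (Or.inr (Or.inl (⟨by omega, x1⟩)))))))))
  · have cls := classifyG2 (k2 1) (k2 2) (k2 3) (k2 0) b1 b2 b3 b0 m1 m2 Ef Ed
    obtain A|A|A|A|A|A|A := cls
    · obtain ⟨x1,x2,x3,x4⟩ := A
      rw [x3, x4] at haEq
      exact Or.inr (Or.inr (Or.inr (Or.inr (Or.inr (Or.inr (Or.inr (Or.inr (Or.inr (Or.inr (Or.inr (Or.inr (Or.inr (Or.inr (Or.inr (Or.inr (Or.inr (Or.inr (Or.inr (Or.inr (⟨by omega, x4⟩))))))))))))))))))))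
    · obtain ⟨x1,x2,x3,x4⟩ := A
      rw [x3, x4] at haEq
      exact Or.inr (Or.inr (Or.inr (Or.inr (Or.inr (Or.inr (Or.inr (Or.inr (Or.inr (Or.inr (Or.inr (Or.inr (Or.inr (Or.inr (Or.inr (Or.inr (Or.inr (Or.inr (Or.inl (⟨by omega, x4⟩)))))))))))))))))))
    · obtain ⟨x1,x2,x3,x4⟩ := A
      rw [x3, x4] at haEq
      exact Or.inr (Or.inr (Or.inr (Or.inr (Or.inr (Or.inr (Or.inr (Or.inr (Or.inr (Or.inr (Or.inr (Or.inr (Or.inr (Or.inr (Or.inr (Or.inr (Or.inl (⟨by omega, x4⟩)))))))))))))))))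
    · obtain ⟨x1,x2,x3,x4⟩ := A
      rw [x3, x4] at haEq
      exact Or.inr (Or.inr (Or.inr (Or.inr (Or.inr (Or.inr (Or.inr (Or.inr (Or.inr (Or.inr (Or.inr (Or.inr (Or.inr (Or.inr (Or.inl (⟨by omega, x4⟩)))))))))))))))
    · obtain ⟨x1,x2,x3,x4⟩ := A
      rw [x3, x4] at haEq
      exact Or.inr (Or.inr (Or.inr (Or.inr (Or.inr (Or.inr (Or.inr (Or.inr (Or.inr (Or.inr (Or.inr (Or.inr (Or.inl (⟨by omega, x4⟩)))))))))))))
    · obtain ⟨x1,x2,x3,x4⟩ := A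
      rw [x3, x4] at haEq
      exact Or.inr (Or.inr (Or.inr (Or.inr (Or.inr (Or.inr (Or.inr (Or.inr (Or.inr (Or.inr (Or.inr (Or.inl (⟨by omega, x4⟩))))))))))))
    · obtain ⟨x1,x2,x3,x4⟩ := A
      rw [x3, x4] at haEq
      exact Or.inr (Or.inr (Or.inr (Or.inr (Or.inr (Or.inr (Or.inr (Or.inr (Or.inl (⟨by omega, x4⟩)))))))))
  · have cls := classifyG2 (k2 2) (k2 3) (k2 0) (k2 1) b2 b3 b0 b1 m1 m2 Eh Ef
    obtain A|A|A|A|A|A|A := cls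
    · obtain ⟨x1,x2,x3,x4⟩ := A
      rw [x2, x3] at haEq
      exact Or.inr (Or.inr (Or.inr (Or.inr (Or.inr (Or.inr (Or.inr (Or.inr (Or.inr (Or.inl (⟨by omega, x3⟩))))))))))
    · obtain ⟨x1,x2,x3,x4⟩ := A
      rw [x2, x3] at haEq
      exact Or.inr (Or.inr (Or.inr (Or.inr (Or.inr (Or.inr (Or.inl (⟨by omega, x3⟩)))))))
    · obtain ⟨x1,x2,x3,x4⟩ := A
      rw [x2, x3] at haEq
      exact Or.inr (Or.inr (Or.inr (Or.inl (⟨by omega, x3⟩))))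
    · obtain ⟨x1,x2,x3,x4⟩ := A
      rw [x2, x3] at haEq
      exact Or.inr (Or.inl (⟨by omega, x3⟩))
    · obtain ⟨x1,x2,x3,x4⟩ := A
      rw [x2, x3] at haEq
      exact Or.inr (Or.inr (Or.inr (Or.inr (Or.inr (Or.inr (Or.inr (Or.inr (Or.inr (Or.inr (Or.inr (Or.inl (⟨by omega, x3⟩))))))))))))
    · obtain ⟨x1,x2,x3,x4⟩ := A
      rw [x2, x3] at haEq
      exact Or.inr (Or.inr (Or.inr (Or.inr (Or.inl (⟨by omega, x3⟩)))))
    · obtain ⟨x1,x2,x3,x4⟩ := A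
      rw [x2, x3] at haEq
      exact Or.inr (Or.inr (Or.inr (Or.inr (Or.inr (Or.inr (Or.inr (Or.inr (Or.inl (⟨by omega, x3⟩)))))))))
  · have cls := classifyG2 (k2 3) (k2 0) (k2 1) (k2 2) b3 b0 b1 b2 m1 m2 Eb Eh
    obtain A|A|A|A|A|A|A := cls
    · obtain ⟨x1,x2,x3,x4⟩ := A
      rw [x1, x2] at haEq
      exact Or.inl (⟨by omega, x2⟩)
    · obtain ⟨x1,x2,x3,x4⟩ := A
      rw [x1, x2] at haEq
      exact Or.inr (Or.inr (Or.inl (⟨by omega, x2⟩)))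
    · obtain ⟨x1,x2,x3,x4⟩ := A
      rw [x1, x2] at haEq
      exact Or.inr (Or.inr (Or.inr (Or.inr (Or.inr (Or.inl (⟨by omega, x2⟩))))))
    · obtain ⟨x1,x2,x3,x4⟩ := A
      rw [x1, x2] at haEq
      exact Or.inr (Or.inr (Or.inr (Or.inr (Or.inr (Or.inr (Or.inr (Or.inl (⟨by omega, x2⟩))))))))
    · obtain ⟨x1,x2,x3,x4⟩ := A
      rw [x1, x2] at haEq
      exact Or.inr (Or.inr (Or.inr (Or.inr (Or.inl (⟨by omega, x2⟩)))))
    · obtain ⟨x1,x2,x3,x4⟩ := A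
      rw [x1, x2] at haEq
      exact Or.inr (Or.inr (Or.inr (Or.inr (Or.inr (Or.inr (Or.inr (Or.inr (Or.inr (Or.inr (Or.inl (⟨by omega, x2⟩)))))))))))
    · obtain ⟨x1,x2,x3,x4⟩ := A
      rw [x1, x2] at haEq
      exact Or.inr (Or.inr (Or.inr (Or.inr (Or.inr (Or.inr (Or.inr (Or.inr (Or.inl (⟨by omega, x2⟩)))))))))

def TG2 : Finset (ℤ × ℤ) := {((1:ℤ),(1:ℤ)),((1:ℤ),(2:ℤ)),((2:ℤ),(1:ℤ)),((2:ℤ),(3:ℤ)),((3:ℤ),(2:ℤ)),((4:ℤ),(1:ℤ)),((4:ℤ),(5:ℤ)),((8:ℤ),(1:ℤ)),((8:ℤ),(3:ℤ)),((8:ℤ),(9:ℤ)),((9:ℤ),(2:ℤ)),((9:ℤ),(5:ℤ)),((24:ℤ),(5:ℤ)),((27:ℤ),(2:ℤ)),((27:ℤ),(14:ℤ)),((32:ℤ),(3:ℤ)),((32:ℤ),(11:ℤ)),((54:ℤ),(5:ℤ)),((54:ℤ),(11:ℤ)),((125:ℤ),(9:ℤ)),((125:ℤ),(14:ℤ))}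

/-- There are exactly 21 arithmetic Y-frieze patterns of type G₂. -/
theorem card_Yfrieze_G2 :
    Nat.card {p : (ℤ → ℤ) × (ℤ → ℤ) //
      (∀ m, 1 ≤ p.1 m) ∧ (∀ m, 1 ≤ p.2 m) ∧
      (∀ m, p.1 m * p.1 (m + 1) = (1 + p.2 m) ^ 3) ∧
      (∀ m, p.2 m * p.2 (m + 1) = 1 + p.1 (m + 1))} = 21 := by
  have hbij : Function.Bijective (fun p : {p : (ℤ → ℤ) × (ℤ → ℤ) //
      (∀ m, 1 ≤ p.1 m) ∧ (∀ m, 1 ≤ p.2 m) ∧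
      (∀ m, p.1 m * p.1 (m + 1) = (1 + p.2 m) ^ 3) ∧
      (∀ m, p.2 m * p.2 (m + 1) = 1 + p.1 (m + 1))} =>
      (⟨(p.1.1 0, p.1.2 0), by
        obtain ⟨c1, c2, c3, c4⟩ := p.2
        have hm := memG2 p.1.1 p.1.2 c1 c2 c3 c4
        simp only [TG2, Finset.mem_insert, Finset.mem_singleton, Prod.mk.injEq]
        tauto⟩ : {t : ℤ × ℤ // t ∈ TG2})) := by
    constructor
    · rintro ⟨p, hp1, hp2, hp3, hp4⟩ ⟨q, hq1, hq2, hq3, hq4⟩ hpq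
      have hval := congrArg Subtype.val hpq
      simp only [Prod.mk.injEq] at hval
      obtain ⟨H1, H2⟩ := agreeG2 p.1 p.2 q.1 q.2 hp1 hp2 hp3 hp4 hq1 hq2 hq3 hq4 hval.1 hval.2
      exact Subtype.ext (Prod.ext H1 H2)
    · rintro ⟨t, ht⟩
      have exSol : ∀ a c e g b d f h : ℤ,
          (1 ≤ a ∧ 1 ≤ c ∧ 1 ≤ e ∧ 1 ≤ g ∧ 1 ≤ b ∧ 1 ≤ d ∧ 1 ≤ f ∧ 1 ≤ h ∧
           a*c = (1+b)^3 ∧ c*e = (1+d)^3 ∧ e*g = (1+f)^3 ∧ g*a = (1+h)^3 ∧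
           b*d = 1+c ∧ d*f = 1+e ∧ f*h = 1+g ∧ h*b = 1+a) →
          ∃ q : {p : (ℤ → ℤ) × (ℤ → ℤ) //
            (∀ m, 1 ≤ p.1 m) ∧ (∀ m, 1 ≤ p.2 m) ∧
            (∀ m, p.1 m * p.1 (m + 1) = (1 + p.2 m) ^ 3) ∧
            (∀ m, p.2 m * p.2 (m + 1) = 1 + p.1 (m + 1))},
            (q.1.1 0, q.1.2 0) = (a, b) := by
        rintro a c e g b d f h ⟨h1,h2,h3,h4,h5,h6,h7,h8,h9,h10,h11,h12,h13,h14,h15,h16⟩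
        exact ⟨⟨(per4 a c e g, per4 b d f h),
          mkSol a c e g b d f h h1 h2 h3 h4 h5 h6 h7 h8 h9 h10 h11 h12 h13 h14 h15 h16⟩,
          by simp [per4]⟩
      simp only [TG2, Finset.mem_insert, Finset.mem_singleton] at ht
      rcases ht with rfl|rfl|rfl|rfl|rfl|rfl|rfl|rfl|rfl|rfl|rfl|rfl|rfl|rfl|rfl|rfl|rfl|rfl|rfl|rfl|rfl
      · obtain ⟨q, hq⟩ := exSol 1 8 125 27 1 9 14 2 (by norm_num)
        exact ⟨q, Subtype.ext hq⟩
      · obtain ⟨q, hq⟩ := exSol 1 27 125 8 2 14 9 1 (by norm_num)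
        exact ⟨q, Subtype.ext hq⟩
      · obtain ⟨q, hq⟩ := exSol 2 4 54 32 1 5 11 3 (by norm_num)
        exact ⟨q, Subtype.ext hq⟩
      · obtain ⟨q, hq⟩ := exSol 2 32 54 4 3 11 5 1 (by norm_num)
        exact ⟨q, Subtype.ext hq⟩
      · obtain ⟨q, hq⟩ := exSol 3 9 24 9 2 5 5 2 (by norm_num)
        exact ⟨q, Subtype.ext hq⟩
      · obtain ⟨q, hq⟩ := exSol 4 2 32 54 1 3 11 5 (by norm_num)
        exact ⟨q, Subtype.ext hq⟩
      · obtain ⟨q, hq⟩ := exSol 4 54 32 2 5 11 3 1 (by norm_num)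
        exact ⟨q, Subtype.ext hq⟩
      · obtain ⟨q, hq⟩ := exSol 8 1 27 125 1 2 14 9 (by norm_num)
        exact ⟨q, Subtype.ext hq⟩
      · obtain ⟨q, hq⟩ := exSol 8 8 8 8 3 3 3 3 (by norm_num)
        exact ⟨q, Subtype.ext hq⟩
      · obtain ⟨q, hq⟩ := exSol 8 125 27 1 9 14 2 1 (by norm_num)
        exact ⟨q, Subtype.ext hq⟩
      · obtain ⟨q, hq⟩ := exSol 9 3 9 24 2 2 5 5 (by norm_num)
        exact ⟨q, Subtype.ext hq⟩
      · obtain ⟨q, hq⟩ := exSol 9 24 9 3 5 5 2 2 (by norm_num)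
        exact ⟨q, Subtype.ext hq⟩
      · obtain ⟨q, hq⟩ := exSol 24 9 3 9 5 2 2 5 (by norm_num)
        exact ⟨q, Subtype.ext hq⟩
      · obtain ⟨q, hq⟩ := exSol 27 1 8 125 2 1 9 14 (by norm_num)
        exact ⟨q, Subtype.ext hq⟩
      · obtain ⟨q, hq⟩ := exSol 27 125 8 1 14 9 1 2 (by norm_num)
        exact ⟨q, Subtype.ext hq⟩
      · obtain ⟨q, hq⟩ := exSol 32 2 4 54 3 1 5 11 (by norm_num)
        exact ⟨q, Subtype.ext hq⟩
      · obtain ⟨q, hq⟩ := exSol 32 54 4 2 11 5 1 3 (by norm_num)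
        exact ⟨q, Subtype.ext hq⟩
      · obtain ⟨q, hq⟩ := exSol 54 4 2 32 5 1 3 11 (by norm_num)
        exact ⟨q, Subtype.ext hq⟩
      · obtain ⟨q, hq⟩ := exSol 54 32 2 4 11 3 1 5 (by norm_num)
        exact ⟨q, Subtype.ext hq⟩
      · obtain ⟨q, hq⟩ := exSol 125 8 1 27 9 1 2 14 (by norm_num)
        exact ⟨q, Subtype.ext hq⟩
      · obtain ⟨q, hq⟩ := exSol 125 27 1 8 14 2 1 9 (by norm_num)
        exact ⟨q, Subtype.ext hq⟩
  rw [Nat.card_congr (Equiv.ofBijective _ hbij), Nat.card_eq_fintype_card, Fintype.card_coe]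
  decide
end

section
/- Let b and c be positive integers with b·c ≥ 4. Then the set of pairs of functions (k₁, k₂) with k₁, k₂ : ℤ → ℤ, k₁(m) ≥ 1 and k₂(m) ≥ 1 for all m ∈ ℤ, and satisfying k₁(m)·k₁(m+1) = (1 + k₂(m))^c and k₂(m)·k₂(m+1) = (1 + k₁(m+1))^b for all m ∈ ℤ, is infinite. -/
/-- Alternating exponent: `c` at even indices, `b` at odd indices. -/
private def dz (b c : ℕ) (n : ℤ) : ℕ := if n % 2 = 0 then c else b

/-- The pair `(aₙ, aₙ₊₁)` of the recurrence `aₙ aₙ₊₂ = 1 + aₙ₊₁ ^ dz(n+1)`. -/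
private def Fp (b c : ℕ) : ℕ → ℤ × ℤ
  | 0 => (1, 1)
  | n+1 => ((Fp b c n).2, (1 + (Fp b c n).2 ^ (dz b c ((n : ℤ) + 1))) / (Fp b c n).1)

private def Fs (b c : ℕ) (n : ℕ) : ℤ := (Fp b c n).1

private lemma Fs_zero (b c : ℕ) : Fs b c 0 = 1 := rfl
private lemma Fs_one (b c : ℕ) : Fs b c 1 = 1 := rfl

private lemma Fs_succ_succ (b c : ℕ) (n : ℕ) :
    Fs b c (n+2) = (1 + Fs b c (n+1) ^ (dz b c ((n : ℤ) + 1))) / Fs b c n := by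
  show (Fp b c (n+1)).2 = _
  rfl

/-- arithmetic auxiliary inequality -/
private lemma aux_ineq (a x y : ℤ) (d₀ d₁ : ℕ) (ha : 0 < a) (hx : 1 ≤ x) (hy : 0 < y)
    (hprod : 4 ≤ d₁ * d₀) (h1 : a ^ 2 ≤ x ^ d₁) (hax : x ^ d₁ ≤ a * y) :
    x ^ 2 ≤ y ^ d₀ := by
  have h2 : (a ^ 2) ^ d₀ ≤ (x ^ d₁) ^ d₀ := pow_le_pow_left₀ (sq_nonneg a) h1 d₀
  have h3 : (x ^ d₁) ^ (2 * d₀) ≤ (a * y) ^ (2 * d₀) :=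
    pow_le_pow_left₀ (pow_nonneg (by linarith) _) hax _
  have h4 : x ^ (d₁ * d₀) * x ^ (d₁ * d₀) ≤ a ^ (2 * d₀) * y ^ (2 * d₀) := by
    calc x ^ (d₁ * d₀) * x ^ (d₁ * d₀) = (x ^ d₁) ^ (2 * d₀) := by
            rw [← pow_add, ← pow_mul]; ring_nf
      _ ≤ (a * y) ^ (2 * d₀) := h3
      _ = a ^ (2 * d₀) * y ^ (2 * d₀) := mul_pow a y _
  have h2' : a ^ (2 * d₀) ≤ x ^ (d₁ * d₀) := by
    rw [pow_mul, pow_mul]; exact h2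
  have h6 : a ^ (2 * d₀) * x ^ (d₁ * d₀) ≤ a ^ (2 * d₀) * y ^ (2 * d₀) := by
    calc a ^ (2 * d₀) * x ^ (d₁ * d₀) ≤ x ^ (d₁ * d₀) * x ^ (d₁ * d₀) :=
          mul_le_mul_of_nonneg_right h2' (pow_nonneg (by linarith) _)
      _ ≤ a ^ (2 * d₀) * y ^ (2 * d₀) := h4
  have h8 : x ^ (d₁ * d₀) ≤ y ^ (2 * d₀) := le_of_mul_le_mul_left h6 (pow_pos ha _)
  have h9 : x ^ 4 ≤ x ^ (d₁ * d₀) := pow_le_pow_right₀ hx hprod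
  have h10 : (x ^ 2) ^ 2 ≤ (y ^ d₀) ^ 2 := by
    rw [← pow_mul, ← pow_mul]
    calc x ^ (2 * 2) = x ^ 4 := by norm_num
      _ ≤ x ^ (d₁ * d₀) := h9
      _ ≤ y ^ (2 * d₀) := h8
      _ = y ^ (d₀ * 2) := by ring_nf
  exact le_of_pow_le_pow_left₀ two_ne_zero (pow_nonneg hy.le _) h10

private lemma dz_mul (b c : ℕ) (n : ℤ) : dz b c (n + 1) * dz b c n = b * c := by
  unfold dz
  rcases Int.emod_two_eq n with h | h
  · rw [if_neg (by omega : ¬ (n + 1) % 2 = 0), if_pos h]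
  · rw [if_pos (by omega : (n + 1) % 2 = 0), if_neg (by omega : ¬ n % 2 = 0)]
    ring

private lemma dz_add_two (b c : ℕ) (n : ℤ) : dz b c (n + 2) = dz b c n := by
  unfold dz
  rcases Int.emod_two_eq n with h | h
  · rw [if_pos h, if_pos (by omega : (n + 2) % 2 = 0)]
  · rw [if_neg (by omega : ¬ (n + 2) % 2 = 0), if_neg (by omega : ¬ n % 2 = 0)]

private lemma dz_pos (b c : ℕ) (hb : 1 ≤ b) (hc : 1 ≤ c) (n : ℤ) : 1 ≤ dz b c n := by
  unfold dz; split_ifs <;> omega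

private lemma Fs_key (b c : ℕ) (hb : 1 ≤ b) (hc : 1 ≤ c) (hbc : 4 ≤ b * c) :
    ∀ n : ℕ, 0 < Fs b c n ∧ 0 < Fs b c (n+1) ∧
      (Fs b c n ∣ 1 + Fs b c (n+1) ^ dz b c ((n : ℤ) + 1)) ∧
      (Fs b c (n+1) ∣ 1 + Fs b c n ^ dz b c (n : ℤ)) ∧
      Fs b c n ^ 2 ≤ Fs b c (n+1) ^ dz b c ((n : ℤ) + 1) := by
  intro n
  induction n with
  | zero =>
    refine ⟨one_pos, one_pos, ?_, ?_, ?_⟩ <;> simp [Fs_zero, Fs_one]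
  | succ n ih =>
    obtain ⟨ha, hx, hdvd1, hdvd2, hgrow⟩ := ih
    set a := Fs b c n with ha_def
    set x := Fs b c (n+1) with hx_def
    set d₀ := dz b c (n : ℤ) with hd0
    set d₁ := dz b c ((n : ℤ) + 1) with hd1
    have hd2 : dz b c ((n : ℤ) + 1 + 1) = d₀ := by
      rw [show ((n : ℤ) + 1 + 1) = (n : ℤ) + 2 by ring, dz_add_two]
    have hy_def : Fs b c (n+2) = (1 + x ^ d₁) / a := Fs_succ_succ b c n
    set y := Fs b c (n+2) with hy_def'
    have hax : a * y = 1 + x ^ d₁ := by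
      rw [hy_def]; exact Int.mul_ediv_cancel' hdvd1
    have hd₁pos : 1 ≤ d₁ := dz_pos b c hb hc _
    have hd₀pos : 1 ≤ d₀ := dz_pos b c hb hc _
    have hy : 0 < y := by nlinarith [pow_pos hx d₁]
    have hprodd : 4 ≤ d₁ * d₀ := by rw [hd1, hd0, dz_mul]; exact hbc
    -- coprimality of x and a
    have hcop : IsCoprime x a := by
      refine ⟨-(x ^ (d₁ - 1)), y, ?_⟩
      have : x ^ d₁ = x ^ (d₁ - 1) * x := by
        rw [← pow_succ]; congr 1; omega
      nlinarith [hax]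
    -- x ∣ 1 + y ^ d₀
    have hdvd3 : x ∣ 1 + y ^ d₀ := by
      have hcop' : IsCoprime x (a ^ d₀) := hcop.pow_right
      have key : x ∣ a ^ d₀ * (1 + y ^ d₀) := by
        have e1 : a ^ d₀ * (1 + y ^ d₀) = (a ^ d₀ + 1) + ((1 + x ^ d₁) ^ d₀ - 1) := by
          rw [← hax]; ring
        rw [e1]
        apply dvd_add
        · have := hdvd2
          rwa [add_comm] at this
        · have hsub : ((1 + x ^ d₁) - 1) ∣ ((1 + x ^ d₁) ^ d₀ - 1 ^ d₀) :=
            sub_dvd_pow_sub_pow _ _ _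
          have hx' : x ∣ (1 + x ^ d₁) - 1 := by
            simpa using dvd_pow_self x (show d₁ ≠ 0 by omega)
          simpa using hx'.trans hsub
      exact hcop'.dvd_of_dvd_mul_left key
    have hgrow' : x ^ 2 ≤ y ^ d₀ :=
      aux_ineq a x y d₀ d₁ ha hx hy hprodd hgrow (by linarith [hax])
    refine ⟨hx, hy, ?_, ?_, ?_⟩
    · push_cast
      rw [hd2]; exact hdvd3
    · push_cast
      rw [← hd1, ← hax]
      exact ⟨a, by ring⟩
    · push_cast
      rw [hd2]; exact hgrow'

private lemma Fs_pos (b c : ℕ) (hb : 1 ≤ b) (hc : 1 ≤ c) (hbc : 4 ≤ b * c) (n : ℕ) :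
    0 < Fs b c n := (Fs_key b c hb hc hbc n).1

private lemma Fs_mul (b c : ℕ) (hb : 1 ≤ b) (hc : 1 ≤ c) (hbc : 4 ≤ b * c) (n : ℕ) :
    Fs b c n * Fs b c (n+2) = 1 + Fs b c (n+1) ^ dz b c ((n : ℤ) + 1) := by
  rw [Fs_succ_succ]
  exact Int.mul_ediv_cancel' (Fs_key b c hb hc hbc n).2.2.1

private lemma Fs_lt (b c : ℕ) (hb : 1 ≤ b) (hc : 1 ≤ c) (hbc : 4 ≤ b * c) (n : ℕ) :
    Fs b c n < Fs b c (n+2) := by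
  have h1 := Fs_mul b c hb hc hbc n
  have h2 := (Fs_key b c hb hc hbc n).2.2.2.2
  have h3 := Fs_pos b c hb hc hbc n
  have h4 := Fs_pos b c hb hc hbc (n+2)
  nlinarith

/-- The doubly infinite sequence. -/
private def Az (b c : ℕ) (n : ℤ) : ℤ :=
  if 0 ≤ n then Fs b c n.toNat else Fs c b (1 - n).toNat

private lemma Az_pos (b c : ℕ) (hb : 1 ≤ b) (hc : 1 ≤ c) (hbc : 4 ≤ b * c) (n : ℤ) :
    0 < Az b c n := by
  unfold Az; split_ifs
  · exact Fs_pos b c hb hc hbc _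
  · exact Fs_pos c b hc hb (by rwa [Nat.mul_comm] at hbc) _

private lemma Az_neg (b c : ℕ) (n : ℤ) (h : n ≤ 1) : Az b c n = Fs c b (1 - n).toNat := by
  unfold Az; split_ifs with h0
  · have : n = 0 ∨ n = 1 := by omega
    rcases this with rfl | rfl <;> simp [Fs_zero, Fs_one]
  · rfl

private lemma dz_swap (b c : ℕ) (n : ℤ) : dz c b (-n) = dz b c (n + 1) := by
  unfold dz
  rcases Int.emod_two_eq n with h | h
  · rw [if_pos (by omega : (-n) % 2 = 0), if_neg (by omega : ¬ (n + 1) % 2 = 0)]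
  · rw [if_neg (by omega : ¬ (-n) % 2 = 0), if_pos (by omega : (n + 1) % 2 = 0)]

private lemma Az_rel (b c : ℕ) (hb : 1 ≤ b) (hc : 1 ≤ c) (hbc : 4 ≤ b * c) (n : ℤ) :
    Az b c n * Az b c (n + 2) = 1 + Az b c (n + 1) ^ dz b c (n + 1) := by
  rcases le_or_gt 0 n with h | h
  · have e0 : Az b c n = Fs b c n.toNat := by unfold Az; rw [if_pos h]
    have e1 : Az b c (n + 1) = Fs b c (n.toNat + 1) := by
      unfold Az; rw [if_pos (by omega)]; congr 1; omega
    have e2 : Az b c (n + 2) = Fs b c (n.toNat + 2) := by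
      unfold Az; rw [if_pos (by omega)]; congr 1; omega
    have e3 : ((n.toNat : ℤ) + 1) = n + 1 := by omega
    rw [e0, e1, e2, ← e3]
    exact Fs_mul b c hb hc hbc n.toNat
  · set k : ℕ := (-1 - n).toNat with hk
    have hkn : (k : ℤ) = -1 - n := by omega
    have e0 : Az b c n = Fs c b (k + 2) := by
      rw [Az_neg b c n (by omega)]; congr 1; omega
    have e1 : Az b c (n + 1) = Fs c b (k + 1) := by
      rw [Az_neg b c (n + 1) (by omega)]; congr 1; omega
    have e2 : Az b c (n + 2) = Fs c b k := by
      rw [Az_neg b c (n + 2) (by omega)]; congr 1; omega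
    have e3 : dz c b ((k : ℤ) + 1) = dz b c (n + 1) := by
      rw [show ((k : ℤ) + 1) = -n by omega, dz_swap]
    rw [e0, e1, e2, ← e3, mul_comm]
    exact Fs_mul c b hc hb (by rwa [Nat.mul_comm] at hbc) k

private lemma dz_odd (b c : ℕ) (m : ℤ) : dz b c (2 * m + 1) = b := by
  unfold dz; rw [if_neg (by omega)]

private lemma dz_even (b c : ℕ) (m : ℤ) : dz b c (2 * m + 2) = c := by
  unfold dz; rw [if_pos (by omega)]

/-- For a rank-2 Cartan matrix of infinite type (`b * c ≥ 4`), there are infinitely many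
arithmetic Y-frieze patterns. -/
theorem infinite_Yfrieze_rank2 (b c : ℕ) (hb : 1 ≤ b) (hc : 1 ≤ c) (hbc : 4 ≤ b * c) :
    Set.Infinite {p : (ℤ → ℤ) × (ℤ → ℤ) |
      (∀ m, 1 ≤ p.1 m) ∧ (∀ m, 1 ≤ p.2 m) ∧
      (∀ m, p.1 m * p.1 (m + 1) = (1 + p.2 m) ^ c) ∧
      (∀ m, p.2 m * p.2 (m + 1) = (1 + p.1 (m + 1)) ^ b)} := by
  classical
  set K₁ : ℤ → ℤ := fun m => Az b c (2 * m) ^ c with hK1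
  set K₂ : ℤ → ℤ := fun m => Az b c (2 * m + 1) ^ b with hK2
  have hApos : ∀ n, 0 < Az b c n := Az_pos b c hb hc hbc
  have hK1pos : ∀ m, 1 ≤ K₁ m := by
    intro m
    calc (1 : ℤ) = 1 ^ c := (one_pow c).symm
      _ ≤ Az b c (2 * m) ^ c := pow_le_pow_left₀ one_pos.le (hApos _) c
  have hK2pos : ∀ m, 1 ≤ K₂ m := by
    intro m
    calc (1 : ℤ) = 1 ^ b := (one_pow b).symm
      _ ≤ Az b c (2 * m + 1) ^ b := pow_le_pow_left₀ one_pos.le (hApos _) b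
  have rel1 : ∀ x : ℤ, K₁ x * K₁ (x + 1) = (1 + K₂ x) ^ c := by
    intro x
    have h := Az_rel b c hb hc hbc (2 * x)
    rw [dz_odd] at h
    show Az b c (2 * x) ^ c * Az b c (2 * (x + 1)) ^ c = _
    rw [show 2 * (x + 1) = 2 * x + 2 by ring, ← mul_pow, h]
  have rel2 : ∀ x : ℤ, K₂ x * K₂ (x + 1) = (1 + K₁ (x + 1)) ^ b := by
    intro x
    have h := Az_rel b c hb hc hbc (2 * x + 1)
    rw [show 2 * x + 1 + 1 = 2 * x + 2 by ring, dz_even,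
        show 2 * x + 1 + 2 = 2 * (x + 1) + 1 by ring] at h
    show Az b c (2 * x + 1) ^ b * Az b c (2 * (x + 1) + 1) ^ b = _
    rw [← mul_pow, h]
    have e : K₁ (x + 1) = Az b c (2 * x + 2) ^ c := by
      show Az b c (2 * (x + 1)) ^ c = _
      rw [show 2 * (x + 1) = 2 * x + 2 by ring]
    rw [e]
  -- the family of shifted solutions
  set f : ℕ → (ℤ → ℤ) × (ℤ → ℤ) :=
    fun j => (fun m => K₁ (m + (j : ℤ)), fun m => K₂ (m + (j : ℤ))) with hf
  have smono : StrictMono fun j : ℕ => Fs b c (2 * j) := by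
    apply strictMono_nat_of_lt_succ
    intro j
    have h := Fs_lt b c hb hc hbc (2 * j)
    rw [show 2 * (j + 1) = 2 * j + 2 by ring]
    exact h
  have gval : ∀ j : ℕ, (f j).1 0 = Fs b c (2 * j) ^ c := by
    intro j
    show K₁ (0 + (j : ℤ)) = _
    rw [zero_add]
    show Az b c (2 * (j : ℤ)) ^ c = _
    unfold Az
    rw [if_pos (by omega : (0 : ℤ) ≤ 2 * (j : ℤ))]
    have e : ((2 * (j : ℤ))).toNat = 2 * j := by omega
    rw [e]
  have finj : Function.Injective f := by
    intro i j hij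
    have hv : Fs b c (2 * i) ^ c = Fs b c (2 * j) ^ c := by
      rw [← gval i, ← gval j, hij]
    by_contra hne
    rcases Nat.lt_or_ge i j with h | h
    · exact absurd hv (ne_of_lt (pow_lt_pow_left₀ (smono (by omega : i < j))
        (Fs_pos b c hb hc hbc _).le (by omega)))
    · have h' : j < i := by omega
      exact absurd hv.symm (ne_of_lt (pow_lt_pow_left₀ (smono (by omega : j < i))
        (Fs_pos b c hb hc hbc _).le (by omega)))
  apply Set.infinite_of_injective_forall_mem finj
  intro j
  refine ⟨fun m => hK1pos _, fun m => hK2pos _, fun m => ?_, fun m => ?_⟩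
  · show K₁ (m + (j : ℤ)) * K₁ (m + 1 + (j : ℤ)) = (1 + K₂ (m + (j : ℤ))) ^ c
    rw [show m + 1 + (j : ℤ) = (m + (j : ℤ)) + 1 by ring]
    exact rel1 _
  · show K₂ (m + (j : ℤ)) * K₂ (m + 1 + (j : ℤ)) = (1 + K₁ (m + 1 + (j : ℤ))) ^ b
    rw [show m + 1 + (j : ℤ) = (m + (j : ℤ)) + 1 by ring]
    exact rel2 _
end

section
/- Let r ≥ 1, let F be a linearly ordered field, and let k : {0,1,…,r,r+1} × ℤ → F satisfy k(0,m) = k(r+1,m) = 0, k(i,m) > 0 for all i ∈ {1,…,r}, m ∈ ℤ, and the Y-diamond rule k(i,m)·k(i,m+1) = (1 + k(i+1,m))·(1 + k(i-1,m+1)) for all i ∈ {1,…,r}, m ∈ ℤ. Then k satisfies the glide symmetry k(i,m) = k(r+1-i, m+i+1) for all i ∈ {1,…,r} and m ∈ ℤ. -/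
/-!
A positive Y-frieze is determined by its first row `κ = k 1` through the diamond rule, since
`1 + k (i+1) m = k i m * k i (m+1) / (1 + k (i-1) (m+1))`. The first row is realised by a
unimodular sequence of vectors `v n ∈ F²` (an SL₂-tiling), `v (n+2) = a n • v (n+1) - v n` with
`a n * a (n+1) = 1 + κ n`, and by the three-term Plücker relation the products
`det (v m, v (m+i+2)) * det (v (m+1), v (m+i+1))` obey the diamond rule, so they are the entries
of the frieze. The zero row `r+1` then forces `v (m+r+3)` to be a multiple `c m • v m` with
`c m * c (m+1) = 1`, and this quasi-periodicity of period `r+3` is the glide symmetry.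
-/

namespace YFrieze

variable {F : Type*} [Field F]

def wedge (u w : F × F) : F := u.1 * w.2 - u.2 * w.1

lemma wedge_self (u : F × F) : wedge u u = 0 := by
  simp only [wedge]; ring

lemma wedge_plucker (a b c d : F × F) :
    wedge a b * wedge c d - wedge a c * wedge b d + wedge a d * wedge b c = 0 := by
  simp only [wedge]; ring

lemma wedge_smul_sub (u w x : F × F) (c : F) : wedge u (c • w - x) = c * wedge u w - wedge u x := by
  simp only [wedge, Prod.fst_sub, Prod.snd_sub, Prod.smul_fst, Prod.smul_snd, smul_eq_mul]; ring

section Tiling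

variable (κ : ℕ → F)

def quiddity : ℕ → F
  | 0 => 1
  | n + 1 => (1 + κ n) / quiddity n

def tilingVec : ℕ → F × F
  | 0 => (1, 0)
  | 1 => (0, 1)
  | n + 2 => quiddity κ n • tilingVec (n + 1) - tilingVec n

def tilingDet (a c : ℕ) : F := wedge (tilingVec κ a) (tilingVec κ c)

def tilingY (i m : ℕ) : F := tilingDet κ m (m + i + 2) * tilingDet κ (m + 1) (m + i + 1)

lemma tilingDet_self (a : ℕ) : tilingDet κ a a = 0 := wedge_self _

lemma tilingDet_plucker (a b c d : ℕ) :
    tilingDet κ a b * tilingDet κ c d - tilingDet κ a c * tilingDet κ b d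
      + tilingDet κ a d * tilingDet κ b c = 0 :=
  wedge_plucker _ _ _ _

lemma tilingDet_add_two (a n : ℕ) :
    tilingDet κ a (n + 2) = quiddity κ n * tilingDet κ a (n + 1) - tilingDet κ a n :=
  wedge_smul_sub _ _ _ _

lemma tilingDet_comm (a c : ℕ) : tilingDet κ c a = -tilingDet κ a c := by
  simp only [tilingDet, wedge]; ring

lemma tilingDet_succ : ∀ n, tilingDet κ n (n + 1) = 1
  | 0 => by simp [tilingDet, tilingVec, wedge]
  | n + 1 => by
    rw [tilingDet_add_two, tilingDet_self, tilingDet_comm, tilingDet_succ n]; ring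

lemma one_add_tilingY (i m : ℕ) :
    1 + tilingY κ i m = tilingDet κ m (m + i + 1) * tilingDet κ (m + 1) (m + i + 2) := by
  have h := tilingDet_plucker κ m (m + 1) (m + i + 1) (m + i + 2)
  rw [tilingDet_succ, tilingDet_succ] at h
  unfold tilingY
  linear_combination h

lemma tilingY_zero (m : ℕ) : tilingY κ 0 m = 0 := by
  rw [tilingY, add_zero, tilingDet_self, mul_zero]

lemma tilingY_diamond (i m : ℕ) :
    tilingY κ (i + 1) m * tilingY κ (i + 1) (m + 1)
      = (1 + tilingY κ (i + 2) m) * (1 + tilingY κ i (m + 1)) := by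
  rw [one_add_tilingY, one_add_tilingY]
  unfold tilingY
  ring_nf

lemma tilingDet_eq_of_period {p : ℕ} (hp : ∀ m, tilingDet κ m (m + p) = 0) (n m : ℕ) :
    tilingDet κ n (m + p) = tilingDet κ m n * tilingDet κ (m + 1) (m + p) := by
  have h := tilingDet_plucker κ m (m + 1) n (m + p)
  rw [tilingDet_succ, hp] at h
  linear_combination h

lemma tilingDet_mul_tilingDet_of_period {p : ℕ} (hp : ∀ m, tilingDet κ m (m + p) = 0) (m : ℕ) :
    tilingDet κ (m + 1) (m + p) * tilingDet κ (m + 2) (m + 1 + p) = 1 := by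
  rw [← tilingDet_eq_of_period κ hp, add_right_comm, tilingDet_succ]

lemma tilingY_glide_of_period {r : ℕ} (hp : ∀ m, tilingDet κ m (m + (r + 3)) = 0) {i : ℕ}
    (hi : i ≤ r + 1) (m : ℕ) : tilingY κ (r + 1 - i) (m + i + 1) = tilingY κ i m := by
  have e₁ : m + i + 1 + (r + 1 - i) + 2 = m + 1 + (r + 3) := by omega
  have e₂ : m + i + 1 + (r + 1 - i) + 1 = m + (r + 3) := by omega
  unfold tilingY
  rw [e₁, e₂, tilingDet_eq_of_period κ hp _ (m + 1), tilingDet_eq_of_period κ hp _ m]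
  linear_combination tilingDet κ m (m + i + 2) * tilingDet κ (m + 1) (m + i + 1) *
    tilingDet_mul_tilingDet_of_period κ hp m

variable {κ}

lemma quiddity_ne_zero (hκ : ∀ n, 1 + κ n ≠ 0) : ∀ n, quiddity κ n ≠ 0
  | 0 => one_ne_zero
  | n + 1 => div_ne_zero (hκ n) (quiddity_ne_zero hκ n)

lemma quiddity_mul_quiddity_succ (hκ : ∀ n, 1 + κ n ≠ 0) (n : ℕ) :
    quiddity κ n * quiddity κ (n + 1) = 1 + κ n :=
  mul_div_cancel₀ _ (quiddity_ne_zero hκ n)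

lemma tilingDet_add_three (hκ : ∀ n, 1 + κ n ≠ 0) (n : ℕ) :
    tilingDet κ n (n + 3) = κ n := by
  rw [tilingDet_add_two, tilingDet_add_two κ n n, tilingDet_self, tilingDet_succ]
  linear_combination quiddity_mul_quiddity_succ hκ n

lemma tilingY_one (hκ : ∀ n, 1 + κ n ≠ 0) (m : ℕ) : tilingY κ 1 m = κ m := by
  rw [tilingY, tilingDet_add_three hκ, tilingDet_succ, mul_one]

end Tiling

/-- A Y-frieze of width `r` on the half-strip `ℕ × ℕ`; in place of positivity only
`1 + k i m ≠ 0` is required, which is what lets the diamond rule be solved for the entry below. -/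
structure IsYFrieze (r : ℕ) (k : ℕ → ℕ → F) : Prop where
  zero_row : ∀ m, k 0 m = 0
  last_row : ∀ m, k (r + 1) m = 0
  one_add_ne_zero : ∀ i m, i ≤ r → 1 + k i m ≠ 0
  diamond : ∀ i m, i < r →
    k (i + 1) m * k (i + 1) (m + 1) = (1 + k (i + 2) m) * (1 + k i (m + 1))

namespace IsYFrieze

variable {r : ℕ} {k : ℕ → ℕ → F}

lemma one_add_first_row_ne_zero (hk : IsYFrieze r k) (n : ℕ) : 1 + k 1 n ≠ 0 := by
  rcases r.eq_zero_or_pos with rfl | hr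
  · simp [hk.last_row]
  · exact hk.one_add_ne_zero 1 n hr

lemma eq_tilingY (hk : IsYFrieze r k) : ∀ i, i ≤ r + 1 → ∀ m, k i m = tilingY (k 1) i m := by
  intro i
  induction i using Nat.twoStepInduction with
  | zero => intro _ m; rw [hk.zero_row, tilingY_zero]
  | one => intro _ m; rw [tilingY_one hk.one_add_first_row_ne_zero]
  | more n ih₀ ih₁ =>
    intro hn m
    have hd := hk.diamond n m (by omega)
    rw [ih₁ (by omega), ih₁ (by omega), tilingY_diamond, ← ih₀ (by omega)] at hd
    exact (add_left_cancel (mul_right_cancel₀ (hk.one_add_ne_zero n (m + 1) (by omega)) hd)).symm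

lemma tilingDet_period (hk : IsYFrieze r k) (m : ℕ) : tilingDet (k 1) m (m + (r + 3)) = 0 := by
  have hdiag : tilingDet (k 1) (m + 1) (m + r + 2) ≠ 0 := by
    have h := hk.one_add_ne_zero r m le_rfl
    rw [hk.eq_tilingY r (by omega), one_add_tilingY] at h
    exact right_ne_zero_of_mul h
  have h := hk.eq_tilingY (r + 1) le_rfl m
  rw [hk.last_row, tilingY] at h
  exact (mul_eq_zero.mp h.symm).resolve_right hdiag

lemma glide (hk : IsYFrieze r k) {i : ℕ} (hi : i ≤ r + 1) (m : ℕ) :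
    k i m = k (r + 1 - i) (m + i + 1) := by
  rw [hk.eq_tilingY i hi, hk.eq_tilingY (r + 1 - i) (by omega),
    tilingY_glide_of_period _ hk.tilingDet_period hi]

end IsYFrieze

end YFrieze

theorem Yfrieze_glide_symmetry_general (r : ℕ) {F : Type*} [Field F] [LinearOrder F] [IsStrictOrderedRing F]
    (k : ℕ → ℤ → F)
    (hk0 : ∀ m, k 0 m = 0) (hkr : ∀ m, k (r + 1) m = 0)
    (hkpos : ∀ i m, 1 ≤ i → i ≤ r → 0 < k i m)
    (hdiamond : ∀ i m, 1 ≤ i → i ≤ r →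
      k i m * k i (m + 1) = (1 + k (i + 1) m) * (1 + k (i - 1) (m + 1))) :
    ∀ i m, 1 ≤ i → i ≤ r → k i m = k (r + 1 - i) (m + i + 1) := by
  intro i m _ hi
  have hnonneg : ∀ j n, j ≤ r → 0 ≤ k j n := by
    rintro (_ | j) n hj
    · exact (hk0 n).ge
    · exact (hkpos (j + 1) n (by omega) hj).le
  have hk : YFrieze.IsYFrieze r (fun j (n : ℕ) => k j (m + n)) :=
    { zero_row := fun n => hk0 _
      last_row := fun n => hkr _
      one_add_ne_zero := fun j n hj => (add_pos_of_pos_of_nonneg one_pos (hnonneg j _ hj)).ne'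
      diamond := fun j n hj => by
        simpa [add_assoc] using hdiamond (j + 1) (m + n) (by omega) hj }
  simpa [add_assoc] using hk.glide (by omega : i ≤ r + 1) 0

/-- Glide symmetry of positive Y-frieze patterns of width `r`. -/
theorem Yfrieze_glide_symmetry (r : ℕ) (hr : 1 ≤ r) {F : Type*} [Field F] [LinearOrder F] [IsStrictOrderedRing F]
    (k : ℕ → ℤ → F)
    (hk0 : ∀ m, k 0 m = 0) (hkr : ∀ m, k (r + 1) m = 0)
    (hkpos : ∀ i m, 1 ≤ i → i ≤ r → 0 < k i m)
    (hdiamond : ∀ i m, 1 ≤ i → i ≤ r →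
      k i m * k i (m + 1) = (1 + k (i + 1) m) * (1 + k (i - 1) (m + 1))) :
    ∀ i m, 1 ≤ i → i ≤ r → k i m = k (r + 1 - i) (m + i + 1) :=
  Yfrieze_glide_symmetry_general r k hk0 hkr hkpos hdiamond
end

section
/- Let r ≥ 1 and let A = (a_{i,j}) be an r×r symmetrisable indecomposable generalised Cartan matrix of finite type. If f : {1,…,r} × ℤ → ℤ takes only nonnegative values and satisfies f(i,m) + f(i,m+1) = ∑_{j=i+1}^{r} (−a_{j,i})·f(j,m) + ∑_{j=1}^{i-1} (−a_{j,i})·f(j,m+1) for all (i,m) ∈ {1,…,r} × ℤ, then f is identically zero. In other words, there are no non-trivial ℤ_{≥0}-valued (tropical) Y-frieze patterns associated to A. -/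
/-- `A` is symmetrisable: there exist positive integers `d i` with `d i * A i j = d j * A j i`. -/
def IsSymmetrisable {r : ℕ} (A : Matrix (Fin r) (Fin r) ℤ) : Prop :=
  ∃ d : Fin r → ℤ, (∀ i, 0 < d i) ∧ ∀ i j, d i * A i j = d j * A j i

/-- `A` is of finite type: every principal minor is positive. -/
def IsFiniteType {r : ℕ} (A : Matrix (Fin r) (Fin r) ℤ) : Prop :=
  ∀ I : Finset (Fin r), I.Nonempty →
    0 < (A.submatrix ((↑) : I → Fin r) ((↑) : I → Fin r)).det

/-- `A` is indecomposable. -/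
def IsIndecomposable {r : ℕ} (A : Matrix (Fin r) (Fin r) ℤ) : Prop :=
  ¬ ∃ I : Finset (Fin r), I.Nonempty ∧ I ≠ Finset.univ ∧
      ∀ i ∈ I, ∀ j, j ∉ I → A i j = 0

open Matrix Finset

namespace Matrix

section PrincipalMinors

variable {n m R : Type*} [DecidableEq n] [DecidableEq m] [CommRing R] [PartialOrder R]

def PrincipalMinorsPos (M : Matrix n n R) : Prop :=
  ∀ I : Finset n, I.Nonempty → 0 < (M.submatrix ((↑) : I → n) ((↑) : I → n)).det

namespace PrincipalMinorsPos

variable {M : Matrix n n R}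

theorem submatrix (hM : M.PrincipalMinorsPos) (e : m ↪ n) :
    (M.submatrix e e).PrincipalMinorsPos := by
  intro J hJ
  have hJe := hM (J.map e) hJ.map
  rwa [← det_submatrix_equiv_self (J.equivMap e)] at hJe

theorem transpose (hM : M.PrincipalMinorsPos) : Mᵀ.PrincipalMinorsPos := by
  intro I hI
  simpa [← transpose_submatrix, det_transpose] using hM I hI

variable [Fintype n] [IsStrictOrderedRing R]

theorem det_pos (hM : M.PrincipalMinorsPos) : 0 < M.det := by
  cases isEmpty_or_nonempty n
  · simp
  · convert hM univ univ_nonempty using 1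
    exact (det_submatrix_equiv_self (Equiv.subtypeUnivEquiv mem_univ) M).symm

theorem diagonal_mul (hM : M.PrincipalMinorsPos) {w : n → R} (hw : ∀ i, 0 < w i) :
    (diagonal w * M).PrincipalMinorsPos := by
  intro I hI
  have hfactor : (diagonal w * M).submatrix ((↑) : I → n) (↑)
      = diagonal (fun i : I => w i) * M.submatrix (↑) (↑) := by
    ext i j
    simp
  rw [hfactor, det_mul, det_diagonal]
  exact mul_pos (prod_pos fun i _ => hw i) (hM I hI)

end PrincipalMinorsPos

theorem PrincipalMinorsPos.intCast_map [IsStrictOrderedRing R] {M : Matrix n n ℤ}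
    (hM : M.PrincipalMinorsPos) : (M.map ((↑) : ℤ → R)).PrincipalMinorsPos := by
  intro I hI
  rw [submatrix_map, ← Int.cast_det]
  exact_mod_cast hM I hI

end PrincipalMinors

/-- Sylvester's criterion. -/
theorem PosDef.of_principalMinorsPos {k : ℕ} {M : Matrix (Fin k) (Fin k) ℝ} (hM : M.IsHermitian)
    (hminors : M.PrincipalMinorsPos) : M.PosDef := by
  induction k with
  | zero => exact .of_dotProduct_mulVec_pos hM fun x hx => absurd (Subsingleton.elim x 0) hx
  | succ k ih =>
    set e : Fin k ⊕ Fin 1 ≃ Fin (k + 1) := finSumFinEquiv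
    set N := M.submatrix e e
    set A := N.toBlocks₁₁
    set B := N.toBlocks₁₂
    set D := N.toBlocks₂₂
    have hN : N = fromBlocks A B Bᴴ D := by
      have hC : N.toBlocks₂₁ = Bᴴ := by
        ext i j
        exact ((hM.submatrix e).apply _ _).symm
      rw [← hC, fromBlocks_toBlocks]
    have hA : A.PosDef :=
      ih (hM.submatrix _) (hminors.submatrix ⟨fun i => e (.inl i), fun _ _ h => by simpa using h⟩)
    have := hA.isUnit.invertible
    have hdet : N.det = A.det * (D - Bᴴ * A⁻¹ * B).det := by
      rw [hN, det_fromBlocks₁₁, invOf_eq_nonsing_inv]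
    have hS : 0 < (D - Bᴴ * A⁻¹ * B) 0 0 := by
      have hNdet : 0 < N.det := by
        rw [det_submatrix_equiv_self]
        exact hminors.det_pos
      rw [hdet] at hNdet
      rw [← det_fin_one (D - Bᴴ * A⁻¹ * B)]
      exact (pos_iff_pos_of_mul_pos hNdet).mp hA.det_pos
    have hSpsd : (D - Bᴴ * A⁻¹ * B).PosSemidef := by
      have hdiag : D - Bᴴ * A⁻¹ * B = diagonal fun _ => (D - Bᴴ * A⁻¹ * B) 0 0 := by
        ext i j
        fin_cases i; fin_cases j; rfl
      rw [hdiag]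
      exact .diagonal fun _ => hS.le
    have hNpsd : N.PosSemidef := hN ▸ (PosDef.fromBlocks₁₁ B D hA).mpr hSpsd
    exact ((posSemidef_submatrix_equiv e).mp hNpsd).posDef_iff_det_ne_zero.mpr
      hminors.det_pos.ne'

theorem PosDef.diagonal_mul_of_principalMinorsPos {k : ℕ} {C : Matrix (Fin k) (Fin k) ℝ}
    (hC : C.PrincipalMinorsPos) {w : Fin k → ℝ} (hw : ∀ i, 0 < w i)
    (hsym : ∀ i j, w i * C i j = w j * C j i) : (diagonal w * C).PosDef :=
  .of_principalMinorsPos (isHermitian_iff_isSymm.mpr (.ext fun i j => by simp [hsym]))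
    (hC.diagonal_mul hw)

section Real

variable {n : Type*} [Fintype n] {M : Matrix n n ℝ}

theorem PosSemidef.dotProduct_mulVec_sq_le (hM : M.PosSemidef) (x y : n → ℝ) :
    (x ⬝ᵥ M *ᵥ y) ^ 2 ≤ (x ⬝ᵥ M *ᵥ x) * (y ⬝ᵥ M *ᵥ y) := by
  have hsymm : y ⬝ᵥ M *ᵥ x = x ⬝ᵥ M *ᵥ y := by
    rw [← dotProduct_transpose_mulVec, (isHermitian_iff_isSymm.mp hM.isHermitian).eq]
  have hquad : ∀ t : ℝ,
      0 ≤ (y ⬝ᵥ M *ᵥ y) * (t * t) + 2 * (x ⬝ᵥ M *ᵥ y) * t + x ⬝ᵥ M *ᵥ x := fun t => by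
    have := hM.dotProduct_mulVec_nonneg (x + t • y)
    simp only [star_trivial, mulVec_add, mulVec_smul, dotProduct_add, add_dotProduct,
      dotProduct_smul, smul_dotProduct, smul_eq_mul, hsymm] at this
    linarith
  have := discrim_le_zero hquad
  rw [discrim] at this
  nlinarith

theorem PosDef.sq_apply_le [DecidableEq n] (hM : M.PosDef) (x : n → ℝ) (i : n) :
    x i ^ 2 ≤ M⁻¹ i i * (x ⬝ᵥ M *ᵥ x) := by
  set u := M⁻¹ *ᵥ Pi.single i 1
  have hMu : M *ᵥ u = Pi.single i 1 := by
    rw [mulVec_mulVec, mul_nonsing_inv _ ((isUnit_iff_isUnit_det M).mp hM.isUnit), one_mulVec]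
  have hux : u ⬝ᵥ M *ᵥ x = x i := by
    rw [← dotProduct_transpose_mulVec, (isHermitian_iff_isSymm.mp hM.isHermitian).eq, hMu,
      dotProduct_single, mul_one]
  have huu : u ⬝ᵥ M *ᵥ u = M⁻¹ i i := by
    rw [hMu, dotProduct_single, mul_one]
    simp [u]
  calc x i ^ 2 = (u ⬝ᵥ M *ᵥ x) ^ 2 := by rw [hux]
    _ ≤ (u ⬝ᵥ M *ᵥ u) * (x ⬝ᵥ M *ᵥ x) := hM.posSemidef.dotProduct_mulVec_sq_le u x
    _ = M⁻¹ i i * (x ⬝ᵥ M *ᵥ x) := by rw [huu]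

end Real

section Triangular

variable {n R : Type*} [LinearOrder n]

def strictUpper [Zero R] (C : Matrix n n R) : Matrix n n R :=
  of fun i j => if i < j then C i j else 0

def strictLower [Zero R] (C : Matrix n n R) : Matrix n n R :=
  of fun i j => if j < i then C i j else 0

variable [CommRing R] {C : Matrix n n R}

theorem one_add_strictUpper_add_one_add_strictLower (hC : ∀ i, C i i = 2) :
    1 + strictUpper C + (1 + strictLower C) = C := by
  ext i j
  rcases lt_trichotomy i j with h | rfl | h
  · simp [strictUpper, strictLower, h, h.ne, h.not_gt]
  · simp [strictUpper, strictLower, hC, one_add_one_eq_two]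
  · simp [strictUpper, strictLower, h, h.ne', h.not_gt]

variable [Fintype n]

theorem transpose_diagonal_mul_one_add_strictUpper {w : n → R}
    (hsym : ∀ i j, w i * C i j = w j * C j i) :
    (diagonal w * (1 + strictUpper C))ᵀ = diagonal w * (1 + strictLower C) := by
  ext i j
  rcases lt_trichotomy i j with h | rfl | h
  · simp [strictUpper, strictLower, h.ne, h.ne', h.not_gt]
  · simp [strictUpper, strictLower]
  · simp [strictUpper, strictLower, h, h.ne, h.ne', (hsym i j).symm]

theorem one_add_strictUpper_mulVec_add_one_add_strictLower_mulVec_eq_zero_iff {x y : n → R} :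
    (1 + strictUpper C) *ᵥ x + (1 + strictLower C) *ᵥ y = 0 ↔
      ∀ i, x i + y i = (∑ j ∈ univ.filter (fun j => i < j), (-C i j) * x j) +
        (∑ j ∈ univ.filter (fun j => j < i), (-C i j) * y j) := by
  simp only [funext_iff, Pi.add_apply, Pi.zero_apply, add_mulVec, one_mulVec, mulVec,
    dotProduct, strictUpper, strictLower, of_apply, ite_mul, zero_mul, ← sum_filter, neg_mul,
    sum_neg_distrib]
  refine forall_congr' fun i => ⟨fun h => ?_, fun h => ?_⟩ <;> linear_combination h

end Triangular

section Recursion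

variable {n R : Type*} [Fintype n] [CommRing R] {P : Matrix n n R}

theorem dotProduct_add_transpose_mulVec_eq {x y : n → R} (h : P *ᵥ x + Pᵀ *ᵥ y = 0) :
    x ⬝ᵥ (P + Pᵀ) *ᵥ x = y ⬝ᵥ (P + Pᵀ) *ᵥ y := by
  have hx : P *ᵥ x = -(Pᵀ *ᵥ y) := eq_neg_of_add_eq_zero_left h
  have key : x ⬝ᵥ P *ᵥ x = y ⬝ᵥ P *ᵥ y :=
    calc x ⬝ᵥ P *ᵥ x = -(x ⬝ᵥ Pᵀ *ᵥ y) := by rw [hx, dotProduct_neg]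
      _ = -(y ⬝ᵥ P *ᵥ x) := by rw [dotProduct_transpose_mulVec]
      _ = y ⬝ᵥ Pᵀ *ᵥ y := by rw [hx, dotProduct_neg, neg_neg]
      _ = y ⬝ᵥ P *ᵥ y := dotProduct_transpose_mulVec P y y
  simp only [add_mulVec, dotProduct_add, dotProduct_transpose_mulVec, key]

theorem dotProduct_add_transpose_mulVec_eq_of_forall {x : ℤ → n → R}
    (h : ∀ m, P *ᵥ x m + Pᵀ *ᵥ x (m + 1) = 0) (m : ℤ) :
    x m ⬝ᵥ (P + Pᵀ) *ᵥ x m = x 0 ⬝ᵥ (P + Pᵀ) *ᵥ x 0 := by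
  induction m using Int.induction_on with
  | zero => rfl
  | succ k ih => rw [← ih, dotProduct_add_transpose_mulVec_eq (h k)]
  | pred k ih => rw [← ih, dotProduct_add_transpose_mulVec_eq (by simpa using h (-k - 1))]

theorem add_transpose_mulVec_sum_range_eq_zero {y : ℕ → n → R}
    (h : ∀ k, P *ᵥ y k + Pᵀ *ᵥ y (k + 1) = 0) {p : ℕ} (hp : y p = y 0) :
    (P + Pᵀ) *ᵥ ∑ k ∈ range p, y k = 0 := by
  have hshift : ∑ k ∈ range p, y (k + 1) = ∑ k ∈ range p, y k := by
    have h₁ := sum_range_succ' y p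
    rw [sum_range_succ, hp] at h₁
    exact (add_right_cancel h₁).symm
  rw [add_mulVec]
  nth_rw 2 [← hshift]
  rw [mulVec_sum, mulVec_sum, ← sum_add_distrib]
  exact sum_eq_zero fun k _ => h k

end Recursion

theorem eq_zero_of_nonneg_of_mulVec_add_transpose_mulVec_eq_zero {n : Type*} [Fintype n]
    [DecidableEq n] {P : Matrix n n ℝ} (hP : (P + Pᵀ).PosDef) {x : ℤ → n → ℤ}
    (hx : ∀ m, 0 ≤ x m)
    (h : ∀ m, P *ᵥ (fun i => (x m i : ℝ)) + Pᵀ *ᵥ (fun i => (x (m + 1) i : ℝ)) = 0) (m : ℤ) :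
    x m = 0 := by
  set G := P + Pᵀ
  set X : ℤ → n → ℝ := fun m i => x m i
  have hX : ∀ m, 0 ≤ X m := fun m i => Int.cast_nonneg (hx m i)
  set c := X 0 ⬝ᵥ G *ᵥ X 0
  have hQ : ∀ m, X m ⬝ᵥ G *ᵥ X m = c := dotProduct_add_transpose_mulVec_eq_of_forall h
  have hbound : ∀ m i, x m i ∈ Set.Icc 0 ⌈G⁻¹ i i * c⌉ := fun m i => by
    have hle : (x m i : ℝ) ≤ ⌈G⁻¹ i i * c⌉ :=
      calc (x m i : ℝ) ≤ (x m i : ℝ) ^ 2 := by exact_mod_cast Int.le_self_sq _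
        _ ≤ G⁻¹ i i * c := hQ m ▸ hP.sq_apply_le (X m) i
        _ ≤ ⌈G⁻¹ i i * c⌉ := Int.le_ceil _
    exact ⟨hx m i, by exact_mod_cast hle⟩
  obtain ⟨a, b, hab, hxab⟩ :=
    (Set.Finite.pi' fun i => Set.finite_Icc _ _).exists_lt_map_eq_of_forall_mem hbound
  set p := (b - a).toNat
  have hp : X (a + p) = X (a + (0 : ℕ)) := by
    rw [show a + (p : ℤ) = b by omega, Nat.cast_zero, add_zero]
    simp [X, hxab]
  have hsum := add_transpose_mulVec_sum_range_eq_zero (y := fun k : ℕ => X (a + k))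
    (fun k => by simpa [add_assoc] using h (a + k)) hp
  have hXa : X a = 0 := by
    have hS := eq_zero_of_mulVec_eq_zero hP.det_pos.ne' hsum
    simpa using (sum_eq_zero_iff_of_nonneg fun k _ => hX _).mp hS 0 (mem_range.mpr (by omega))
  have hc : c = 0 := by rw [← hQ a, hXa, zero_dotProduct]
  have hXm : X m = 0 := by
    by_contra hne
    simpa [hQ, hc] using hP.dotProduct_mulVec_pos hne
  funext i
  simpa [X] using congrFun hXm i

end Matrix

theorem IsSymmetrisable.exists_pos_weights_transpose {r : ℕ} {A : Matrix (Fin r) (Fin r) ℤ}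
    (hA : IsSymmetrisable A) :
    ∃ w : Fin r → ℝ, (∀ i, 0 < w i) ∧
      ∀ i j, w i * (A.map (↑))ᵀ i j = w j * (A.map (↑))ᵀ j i := by
  obtain ⟨d, hdpos, hd⟩ := hA
  have hdpos' : ∀ i, (0 : ℝ) < d i := fun i => by exact_mod_cast hdpos i
  refine ⟨fun i => (d i : ℝ)⁻¹, fun i => inv_pos.mpr (hdpos' i), fun i j => ?_⟩
  have hdij : (d i : ℝ) * A i j = d j * A j i := by exact_mod_cast hd i j
  simp only [transpose_apply, map_apply, inv_mul_eq_div]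
  rw [div_eq_div_iff (hdpos' i).ne' (hdpos' j).ne']
  linarith

theorem tropical_Yfrieze_trivial_general {r : ℕ}
    (A : Matrix (Fin r) (Fin r) ℤ) (hA : IsGCM A)
    (hsym : IsSymmetrisable A) (hfin : IsFiniteType A)
    (f : Fin r → ℤ → ℤ) (hnonneg : ∀ i m, 0 ≤ f i m)
    (hrel : ∀ i m, f i m + f i (m + 1) =
      (∑ j ∈ Finset.univ.filter (fun j => i < j), (-(A j i)) * f j m) +
      (∑ j ∈ Finset.univ.filter (fun j => j < i), (-(A j i)) * f j (m + 1))) :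
    ∀ i m, f i m = 0 := by
  set C : Matrix (Fin r) (Fin r) ℝ := (A.map (↑))ᵀ
  obtain ⟨w, hw, hCsym⟩ := hsym.exists_pos_weights_transpose
  set P := diagonal w * (1 + strictUpper C)
  have hP : (P + Pᵀ).PosDef := by
    rw [transpose_diagonal_mul_one_add_strictUpper hCsym, ← mul_add,
      one_add_strictUpper_add_one_add_strictLower fun i => by simp [C, hA.1 i]]
    exact .diagonal_mul_of_principalMinorsPos (PrincipalMinorsPos.intCast_map hfin).transpose
      hw hCsym
  have hzero := eq_zero_of_nonneg_of_mulVec_add_transpose_mulVec_eq_zero hP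
    (x := fun m i => f i m) (fun m i => hnonneg i m) fun m => by
      rw [transpose_diagonal_mul_one_add_strictUpper hCsym, ← mulVec_mulVec, ← mulVec_mulVec,
        ← mulVec_add, one_add_strictUpper_mulVec_add_one_add_strictLower_mulVec_eq_zero_iff.mpr,
        mulVec_zero]
      intro i
      simpa [C] using congrArg (Int.cast : ℤ → ℝ) (hrel i m)
  exact fun i m => congrFun (hzero m) i

/-- There are no non-trivial `ℤ_{≥0}`-valued (tropical) Y-frieze patterns associated to an
indecomposable symmetrisable Cartan matrix of finite type. -/
theorem tropical_Yfrieze_trivial {r : ℕ} (hr : 1 ≤ r)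
    (A : Matrix (Fin r) (Fin r) ℤ) (hA : IsGCM A)
    (hsym : IsSymmetrisable A) (hfin : IsFiniteType A) (hind : IsIndecomposable A)
    (f : Fin r → ℤ → ℤ) (hnonneg : ∀ i m, 0 ≤ f i m)
    (hrel : ∀ i m, f i m + f i (m + 1) =
      (∑ j ∈ Finset.univ.filter (fun j => i < j), (-(A j i)) * f j m) +
      (∑ j ∈ Finset.univ.filter (fun j => j < i), (-(A j i)) * f j (m + 1))) :
    ∀ i m, f i m = 0 :=
  tropical_Yfrieze_trivial_general A hA hsym hfin f hnonneg hrel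
end

section
/- Let A be the type A₃ Cartan matrix (3×3, a_{i,i} = 2, a_{i,j} = −1 if |i−j| = 1, a_{i,j} = 0 otherwise). Consider positive ℚ-valued frieze patterns f and Y-frieze patterns k of width 3, and the map p sending a frieze pattern f to the Y-frieze pattern p(f) defined by p(f)(i,m) = f(i+1,m)·f(i−1,m+1) for i ∈ {1,2,3} (with the convention f(0,·) = f(4,·) = 1). Then p is neither injective nor surjective: there exist positive ℚ-valued frieze patterns f ≠ f' of width 3 with p(f) = p(f'), and there exists a positive ℚ-valued Y-frieze pattern k of width 3 such that k ≠ p(f) for every positive ℚ-valued frieze pattern f of width 3. -/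
/-- A positive ℚ-valued frieze pattern of width 3 (type A₃). -/
def IsFriezeA3 (f : Fin 5 → ℤ → ℚ) : Prop :=
  (∀ m, f 0 m = 1) ∧ (∀ m, f 4 m = 1) ∧
  (∀ (i : Fin 5) (m : ℤ), 1 ≤ (i : ℕ) → (i : ℕ) ≤ 3 → 0 < f i m) ∧
  (∀ (i : Fin 5) (m : ℤ), 1 ≤ (i : ℕ) → (i : ℕ) ≤ 3 →
    f i m * f i (m + 1) = 1 + f (i + 1) m * f (i - 1) (m + 1))

/-- A positive ℚ-valued Y-frieze pattern of width 3 (type A₃). -/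
def IsYFriezeA3 (k : Fin 5 → ℤ → ℚ) : Prop :=
  (∀ m, k 0 m = 0) ∧ (∀ m, k 4 m = 0) ∧
  (∀ (i : Fin 5) (m : ℤ), 1 ≤ (i : ℕ) → (i : ℕ) ≤ 3 → 0 < k i m) ∧
  (∀ (i : Fin 5) (m : ℤ), 1 ≤ (i : ℕ) → (i : ℕ) ≤ 3 →
    k i m * k i (m + 1) = (1 + k (i + 1) m) * (1 + k (i - 1) (m + 1)))

/-- The map from frieze patterns to Y-frieze patterns in type A₃. -/
def pA3 (f : Fin 5 → ℤ → ℚ) : Fin 5 → ℤ → ℚ := fun i m =>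
  if (i : ℕ) = 0 ∨ (i : ℕ) = 4 then 0 else f (i + 1) m * f (i - 1) (m + 1)

lemma fv0 : ((0 : Fin 5) : ℕ) = 0 := rfl
lemma fv1 : ((1 : Fin 5) : ℕ) = 1 := rfl
lemma fv2 : ((2 : Fin 5) : ℕ) = 2 := rfl
lemma fv3 : ((3 : Fin 5) : ℕ) = 3 := rfl
lemma fv4 : ((4 : Fin 5) : ℕ) = 4 := rfl
lemma fs1 : (1 + 1 : Fin 5) = 2 := rfl
lemma fs2 : (2 + 1 : Fin 5) = 3 := rfl
lemma fs3 : (3 + 1 : Fin 5) = 4 := rfl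
lemma fp1 : (1 - 1 : Fin 5) = 0 := rfl
lemma fp2 : (2 - 1 : Fin 5) = 1 := rfl
lemma fp3 : (3 - 1 : Fin 5) = 2 := rfl

lemma fin5_cases (i : Fin 5) (h1 : 1 ≤ (i : ℕ)) (h3 : (i : ℕ) ≤ 3) :
    i = 1 ∨ i = 2 ∨ i = 3 := by
  simp only [Fin.ext_iff, fv1, fv2, fv3]
  omega

lemma fin5_all (i : Fin 5) : i = 0 ∨ i = 1 ∨ i = 2 ∨ i = 3 ∨ i = 4 := by
  have h := i.isLt
  simp only [Fin.ext_iff, fv0, fv1, fv2, fv3, fv4]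
  omega

/-- A 2-periodic frieze pattern: rows (1,3,1,3,...), (2,2,2,...), (1,3,1,3,...). -/
def fEx : Fin 5 → ℤ → ℚ := fun i m =>
  if (i : ℕ) = 1 ∨ (i : ℕ) = 3 then (if m % 2 = 0 then 1 else 3)
  else if (i : ℕ) = 2 then 2 else 1

/-- The shift of `fEx` by one. -/
def fEx' : Fin 5 → ℤ → ℚ := fun i m => fEx i (m + 1)

lemma isFrieze_fEx : IsFriezeA3 fEx := by
  refine ⟨fun m => rfl, fun m => rfl, ?_, ?_⟩
  · intro i m h1 h3
    have hm : m % 2 = 0 ∨ m % 2 = 1 := by omega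
    rcases fin5_cases i h1 h3 with rfl | rfl | rfl <;> rcases hm with hm | hm <;>
      simp only [fEx, fv0, fv1, fv2, fv3, fv4, hm] <;> norm_num
  · intro i m h1 h3
    have hm : (m % 2 = 0 ∧ (m + 1) % 2 = 1) ∨ (m % 2 = 1 ∧ (m + 1) % 2 = 0) := by omega
    rcases fin5_cases i h1 h3 with rfl | rfl | rfl <;>
      rcases hm with ⟨hm, hm'⟩ | ⟨hm, hm'⟩ <;>
      simp only [fEx, fv0, fv1, fv2, fv3, fv4, fs1, fs2, fs3, fp1, fp2, fp3, hm, hm'] <;>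
      norm_num

lemma isFrieze_fEx' : IsFriezeA3 fEx' := by
  obtain ⟨h0, h4, hpos, hrel⟩ := isFrieze_fEx
  refine ⟨fun m => h0 (m + 1), fun m => h4 (m + 1), fun i m h1 h3 => hpos i (m + 1) h1 h3,
    fun i m h1 h3 => ?_⟩
  have := hrel i (m + 1) h1 h3
  simpa [fEx', add_assoc] using this

/-- The 6-periodic Y-frieze pattern generated from the initial column (1,1,1). -/
def kEx : Fin 5 → ℤ → ℚ := fun i m =>
  if (i : ℕ) = 1 then
    (if m % 6 = 0 then 1 else if m % 6 = 1 then 2 else if m % 6 = 2 then 7/2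
     else if m % 6 = 3 then 2 else if m % 6 = 4 then 1 else 7)
  else if (i : ℕ) = 2 then
    (if m % 6 = 0 then 1 else if m % 6 = 1 then 6 else if m % 6 = 2 then 6
     else if m % 6 = 3 then 1 else if m % 6 = 4 then 6 else 6)
  else if (i : ℕ) = 3 then
    (if m % 6 = 0 then 1 else if m % 6 = 1 then 7 else if m % 6 = 2 then 1
     else if m % 6 = 3 then 2 else if m % 6 = 4 then 7/2 else 2)
  else 0

lemma isYFrieze_kEx : IsYFriezeA3 kEx := by
  refine ⟨fun m => rfl, fun m => rfl, ?_, ?_⟩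
  · intro i m h1 h3
    have hm : m % 6 = 0 ∨ m % 6 = 1 ∨ m % 6 = 2 ∨ m % 6 = 3 ∨ m % 6 = 4 ∨ m % 6 = 5 := by
      omega
    rcases fin5_cases i h1 h3 with rfl | rfl | rfl <;>
      rcases hm with hm | hm | hm | hm | hm | hm <;>
      simp only [kEx, fv0, fv1, fv2, fv3, fv4, hm] <;> norm_num
  · intro i m h1 h3
    have hm : (m % 6 = 0 ∧ (m + 1) % 6 = 1) ∨ (m % 6 = 1 ∧ (m + 1) % 6 = 2) ∨
        (m % 6 = 2 ∧ (m + 1) % 6 = 3) ∨ (m % 6 = 3 ∧ (m + 1) % 6 = 4) ∨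
        (m % 6 = 4 ∧ (m + 1) % 6 = 5) ∨ (m % 6 = 5 ∧ (m + 1) % 6 = 0) := by omega
    rcases fin5_cases i h1 h3 with rfl | rfl | rfl <;>
      rcases hm with ⟨hm, hm'⟩ | ⟨hm, hm'⟩ | ⟨hm, hm'⟩ | ⟨hm, hm'⟩ | ⟨hm, hm'⟩ | ⟨hm, hm'⟩ <;>
      simp only [kEx, fv0, fv1, fv2, fv3, fv4, fs1, fs2, fs3, fp1, fp2, fp3, hm, hm'] <;>
      norm_num

/-- In type A₃ over ℚ, the map `p` from frieze patterns to Y-frieze patterns is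
neither injective nor surjective. -/
theorem pA3_not_injective_not_surjective :
    (∃ f f' : Fin 5 → ℤ → ℚ, IsFriezeA3 f ∧ IsFriezeA3 f' ∧ f ≠ f' ∧ pA3 f = pA3 f') ∧
    (∃ k : Fin 5 → ℤ → ℚ, IsYFriezeA3 k ∧ ∀ f : Fin 5 → ℤ → ℚ, IsFriezeA3 f → pA3 f ≠ k) := by
  constructor
  · refine ⟨fEx, fEx', isFrieze_fEx, isFrieze_fEx', ?_, ?_⟩
    · intro h
      have h10 : fEx 1 0 = fEx' 1 0 := by rw [h]
      simp only [fEx, fEx', fv1] at h10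
      norm_num at h10
    · funext i m
      have hm : (m % 2 = 0 ∧ (m + 1) % 2 = 1 ∧ (m + 1 + 1) % 2 = 0) ∨
          (m % 2 = 1 ∧ (m + 1) % 2 = 0 ∧ (m + 1 + 1) % 2 = 1) := by omega
      rcases fin5_all i with rfl | rfl | rfl | rfl | rfl <;>
        rcases hm with ⟨hm, hm', hm''⟩ | ⟨hm, hm', hm''⟩ <;>
        simp only [pA3, fEx, fEx', fv0, fv1, fv2, fv3, fv4, fs1, fs2, fs3, fp1, fp2, fp3,
          hm, hm', hm''] <;> norm_num
  · refine ⟨kEx, isYFrieze_kEx, ?_⟩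
    intro f hf h
    obtain ⟨h0, h4, _, _⟩ := hf
    have e1 : pA3 f 3 0 = kEx 3 0 := by rw [h]
    have e2 : pA3 f 1 1 = kEx 1 1 := by rw [h]
    have v1 : pA3 f 3 0 = f 2 1 := by
      simp only [pA3, fv3, fs3, fp3]
      norm_num [h4]
    have v2 : pA3 f 1 1 = f 2 1 := by
      simp only [pA3, fv1, fs1, fp1]
      norm_num [h0]
    rw [v1] at e1; rw [v2] at e2
    simp only [kEx, fv1, fv3] at e1 e2
    norm_num at e1 e2
    rw [e1] at e2
    norm_num at e2
end

section
/- Let r ≥ 1 and let A = (a_{i,j}) be an r×r symmetrisable indecomposable generalised Cartan matrix of finite type. Let L be the r×r lower unitriangular matrix with L_{i,i} = 1, L_{i,j} = a_{i,j} for i > j and L_{i,j} = 0 for i < j, and let U be the r×r upper unitriangular matrix with U_{i,i} = 1, U_{i,j} = a_{i,j} for i < j and U_{i,j} = 0 for i > j. Set C = (−L·U^{−1})^T, a matrix with rational entries. Then there exists a positive integer h such that I + C + C² + ⋯ + C^{h−1} = 0 (in particular C^h = I). -/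
open Matrix

/-
Symmetrising `A` by `D = diag d` gives the matrix `G = A D⁻¹`, whose principal minors are those of
`A` times positive numbers, so `G` is positive definite by Sylvester's criterion. Writing
`A = L + U`, symmetry of `G` reads `L D⁻¹ = D⁻¹ Uᵀ`, and from this one checks `Cᵀ G C = G`. As `U`
is unitriangular, `C` has integer entries, so all powers of `C` are integer matrices preserving a
positive definite form; by Cauchy–Schwarz their entries are bounded, hence `C` has finite order `h`.
Finally `C - 1 = -(A U⁻¹)ᵀ` is invertible, and `(1 + C + ⋯ + C^(h-1)) (C - 1) = C^h - 1 = 0`.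
-/

theorem Int.finite_setOf_sq_cast_le {K : Type*} [Field K] [LinearOrder K] [IsStrictOrderedRing K]
    [Archimedean K] (c : K) : {m : ℤ | (m : K) ^ 2 ≤ c}.Finite := by
  obtain ⟨N, hN⟩ := exists_nat_ge c
  refine (Set.finite_Icc (-(N : ℤ)) N).subset fun m hm => abs_le.1 ?_
  have hm : m ^ 2 ≤ N := by exact_mod_cast (show (m : K) ^ 2 ≤ N from hm.trans hN)
  exact (Int.natCast_natAbs m ▸ Int.natAbs_le_self_sq m).trans hm

namespace Matrix

theorem det_submatrix_submatrix_finset {m n R : Type*} [CommRing R] [DecidableEq m]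
    [DecidableEq n] (S : Matrix n n R) (f : m ↪ n) (I : Finset m) :
    ((S.submatrix f f).submatrix ((↑) : I → m) (↑)).det =
      (S.submatrix ((↑) : I.map f → n) (↑)).det := by
  rw [← det_submatrix_equiv_self (I.equivMap f)]
  rfl

section Sylvester

variable {K : Type*} [Field K] [LinearOrder K] [StarRing K] [StarOrderedRing K]

theorem PosDef.fromBlocks₁₁_of_posDef_schur {m n : Type*} [Fintype m] [Fintype n] [DecidableEq m]
    {A : Matrix m m K} (B : Matrix m n K) (D : Matrix n n K) (hA : A.PosDef) [Invertible A]
    (hS : (D - Bᴴ * A⁻¹ * B).PosDef) : (fromBlocks A B Bᴴ D).PosDef := by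
  refine .of_dotProduct_mulVec_pos ((IsHermitian.fromBlocks₁₁ B D hA.1).2 hS.1) fun v hv => ?_
  rw [dotProduct_mulVec, ← Sum.elim_comp_inl_inr v, schur_complement_eq₁₁ B D _ _ hA.1,
    ← dotProduct_mulVec, ← dotProduct_mulVec]
  by_cases hy : v ∘ Sum.inr = 0
  · have hx : v ∘ Sum.inl ≠ 0 := fun hx => hv (by
      rw [← Sum.elim_comp_inl_inr v, hx, hy, Sum.elim_zero_zero])
    simpa [hy] using hA.dotProduct_mulVec_pos hx
  · exact add_pos_of_nonneg_of_pos (hA.posSemidef.dotProduct_mulVec_nonneg _)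
      (hS.dotProduct_mulVec_pos hy)

theorem PosDef.of_posDef_submatrix_castSucc {n : ℕ} {S : Matrix (Fin (n + 1)) (Fin (n + 1)) K}
    (hS : S.IsHermitian) (hS' : (S.submatrix Fin.castSucc Fin.castSucc).PosDef)
    (hdet' : 0 < (S.submatrix Fin.castSucc Fin.castSucc).det) (hdet : 0 < S.det) :
    S.PosDef := by
  set e : Fin n ⊕ Fin 1 ≃ Fin (n + 1) := finSumFinEquiv
  obtain ⟨B, D, hT⟩ : ∃ B D, S.submatrix e e =
      fromBlocks (S.submatrix Fin.castSucc Fin.castSucc) B Bᴴ D := by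
    refine ⟨(S.submatrix e e).toBlocks₁₂, (S.submatrix e e).toBlocks₂₂, ?_⟩
    conv_lhs => rw [← fromBlocks_toBlocks (S.submatrix e e)]
    congr 1
    ext i j
    exact (hS.apply _ _).symm
  have := hS'.isUnit.invertible
  rw [← det_submatrix_equiv_self e, hT, det_fromBlocks₁₁, invOf_eq_nonsing_inv] at hdet
  suffices (S.submatrix e e).PosDef by simpa using this.submatrix e.symm.injective
  rw [hT]
  refine .fromBlocks₁₁_of_posDef_schur _ _ hS' ?_
  set X := D - Bᴴ * (S.submatrix Fin.castSucc Fin.castSucc)⁻¹ * B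
  have hX : 0 < X default default := by
    rw [← det_unique X]
    exact pos_of_mul_pos_right hdet hdet'.le
  rw [show X = diagonal fun _ => X default default by
    ext i j; simp [Subsingleton.elim i default, Subsingleton.elim j default]]
  exact posDef_diagonal_iff.2 fun _ => hX

theorem det_pos_of_forall_det_submatrix_pos {n : Type*} [Fintype n] [DecidableEq n]
    {S : Matrix n n K}
    (h : ∀ I : Finset n, I.Nonempty → 0 < (S.submatrix ((↑) : I → n) (↑)).det) : 0 < S.det := by
  cases isEmpty_or_nonempty n
  · simp
  · exact (det_submatrix_equiv_self (Equiv.subtypeUnivEquiv Finset.mem_univ) S) ▸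
      h Finset.univ Finset.univ_nonempty

theorem posDef_of_forall_det_submatrix_pos {n : ℕ} {S : Matrix (Fin n) (Fin n) K}
    (hS : S.IsHermitian)
    (h : ∀ I : Finset (Fin n), I.Nonempty → 0 < (S.submatrix ((↑) : I → Fin n) (↑)).det) :
    S.PosDef := by
  induction n with
  | zero => exact .of_dotProduct_mulVec_pos hS fun x hx => absurd (Subsingleton.elim x 0) hx
  | succ n ih =>
    have h' : ∀ I : Finset (Fin n), I.Nonempty →
        0 < ((S.submatrix Fin.castSucc Fin.castSucc).submatrix ((↑) : I → Fin n) (↑)).det :=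
      fun I hI => (h _ hI.map).trans_eq (det_submatrix_submatrix_finset S Fin.castSuccEmb I).symm
    exact .of_posDef_submatrix_castSucc hS (ih (hS.submatrix _) h')
      (det_pos_of_forall_det_submatrix_pos h') (det_pos_of_forall_det_submatrix_pos h)

end Sylvester

theorem transpose_pow_mul_mul_pow {n R : Type*} [Fintype n] [DecidableEq n] [CommSemiring R]
    {G C : Matrix n n R} (h : Cᵀ * G * C = G) (k : ℕ) : (C ^ k)ᵀ * G * C ^ k = G := by
  induction k with
  | zero => simp
  | succ k ih =>
    calc (C ^ (k + 1))ᵀ * G * C ^ (k + 1) = Cᵀ * ((C ^ k)ᵀ * G * C ^ k) * C := by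
          simp only [pow_succ, transpose_mul, Matrix.mul_assoc]
      _ = G := by rw [ih, h]

theorem isUnit_of_transpose_mul_mul_eq {n R : Type*} [Fintype n] [DecidableEq n] [CommRing R]
    {G C : Matrix n n R} (hG : IsUnit G) (hC : Cᵀ * G * C = G) : IsUnit C :=
  .of_mul_eq_one_right (G⁻¹ * Cᵀ * G) <| by
    rw [Matrix.mul_assoc, Matrix.mul_assoc, ← Matrix.mul_assoc Cᵀ, hC,
      nonsing_inv_mul _ ((isUnit_iff_isUnit_det G).1 hG)]

section Isometry

variable {K : Type*} [Field K] [LinearOrder K] [IsStrictOrderedRing K] [StarRing K] [TrivialStar K]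
  {n : Type*} [Fintype n] [DecidableEq n]

theorem PosDef.sq_apply_le_of_transpose_mul_mul_eq {G M : Matrix n n K} (hG : G.PosDef)
    (hM : Mᵀ * G * M = G) (i j : n) : M i j ^ 2 ≤ G⁻¹ i i * G j j := by
  have hGt : Gᵀ = G := isHermitian_iff_isSymm.1 hG.1
  have hB : LinearMap.IsSymm (toBilin' G) :=
    LinearMap.BilinForm.isSymm_iff.1 (isSymm_toBilin'_iff_isSymm.2 hGt)
  have hnonneg : ∀ x, 0 ≤ toBilin' G x x := fun x => by
    simpa [toBilin'_apply'] using hG.posSemidef.dotProduct_mulVec_nonneg x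
  set u := G⁻¹ *ᵥ Pi.single i 1
  set y := M *ᵥ Pi.single j 1
  have hGu : G *ᵥ u = Pi.single i 1 := by
    rw [mulVec_mulVec, mul_nonsing_inv _ ((isUnit_iff_isUnit_det G).1 hG.isUnit), one_mulVec]
  have huy : toBilin' G u y = M i j := by
    rw [toBilin'_apply', dotProduct_mulVec, ← mulVec_transpose, hGt, hGu, single_one_dotProduct]
    simp [y]
  have huu : toBilin' G u u = G⁻¹ i i := by
    rw [toBilin'_apply', dotProduct_comm, hGu, single_one_dotProduct]
    simp [u]
  have hyy : toBilin' G y y = G j j := by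
    rw [toBilin'_apply', dotProduct_comm, dotProduct_mulVec, ← mulVec_transpose, mulVec_mulVec,
      mulVec_mulVec, hM]
    simp
  simpa [huy, huu, hyy] using LinearMap.BilinForm.apply_sq_le_of_symm _ hnonneg hB u y

variable [Archimedean K]

theorem PosDef.finite_setOf_transpose_mul_mul_eq {G : Matrix n n K} (hG : G.PosDef) :
    {M : Matrix n n ℤ | (M.map (Int.castRingHom K))ᵀ * G * M.map (Int.castRingHom K) = G}.Finite :=
  (Set.Finite.pi fun i => Set.Finite.pi fun j =>
    Int.finite_setOf_sq_cast_le (G⁻¹ i i * G j j)).subset fun _ hM i _ j _ =>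
      hG.sq_apply_le_of_transpose_mul_mul_eq hM i j

theorem PosDef.isOfFinOrder_of_transpose_mul_mul_eq {G : Matrix n n K} (hG : G.PosDef)
    {M : Matrix n n ℤ}
    (hM : (M.map (Int.castRingHom K))ᵀ * G * M.map (Int.castRingHom K) = G) :
    IsOfFinOrder (M.map (Int.castRingHom K)) := by
  obtain ⟨a, b, hab, hpow⟩ := hG.finite_setOf_transpose_mul_mul_eq.exists_lt_map_eq_of_forall_mem
    (f := (M ^ ·)) fun k => show _ = G by rw [Matrix.map_pow]; exact transpose_pow_mul_mul_pow hM k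
  have hunit := (isUnit_of_transpose_mul_mul_eq hG.isUnit hM).pow a
  refine isOfFinOrder_iff_pow_eq_one.2 ⟨b - a, Nat.sub_pos_of_lt hab, hunit.mul_left_cancel ?_⟩
  rw [← pow_add, Nat.add_sub_cancel' hab.le, mul_one, ← Matrix.map_pow, ← Matrix.map_pow, hpow]

end Isometry

section Coxeter

variable {ι R : Type*} [LinearOrder ι]

def unitLowerPart [Zero R] [One R] (A : Matrix ι ι R) : Matrix ι ι R :=
  of fun i j => if i = j then 1 else if j < i then A i j else 0

def unitUpperPart [Zero R] [One R] (A : Matrix ι ι R) : Matrix ι ι R :=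
  of fun i j => if i = j then 1 else if i < j then A i j else 0

theorem unitLowerPart_map {S : Type*} [Semiring R] [Semiring S] (A : Matrix ι ι R) (f : R →+* S) :
    (unitLowerPart A).map f = unitLowerPart (A.map f) := by
  ext i j; simp only [unitLowerPart, map_apply, of_apply]; split_ifs <;> simp

theorem unitUpperPart_map {S : Type*} [Semiring R] [Semiring S] (A : Matrix ι ι R) (f : R →+* S) :
    (unitUpperPart A).map f = unitUpperPart (A.map f) := by
  ext i j; simp only [unitUpperPart, map_apply, of_apply]; split_ifs <;> simp

theorem unitLowerPart_add_unitUpperPart [AddMonoidWithOne R] {A : Matrix ι ι R}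
    (hA : ∀ i, A i i = 2) : unitLowerPart A + unitUpperPart A = A := by
  ext i j
  simp only [unitLowerPart, unitUpperPart, add_apply, of_apply]
  rcases lt_trichotomy i j with h | rfl | h
  · simp [h, h.ne, not_lt_of_gt h]
  · simp [hA, one_add_one_eq_two]
  · simp [h, h.ne', not_lt_of_gt h]

theorem unitLowerPart_mul_diagonal [CommSemiring R] [Fintype ι] [DecidableEq ι]
    {A : Matrix ι ι R} {e : ι → R} (hAe : (A * diagonal e).IsSymm) :
    unitLowerPart A * diagonal e = diagonal e * (unitUpperPart A)ᵀ := by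
  ext i j
  have := congrFun (congrFun hAe j) i
  simp only [transpose_apply, mul_diagonal] at this
  simp only [unitLowerPart, unitUpperPart, mul_diagonal, diagonal_mul, transpose_apply, of_apply]
  rcases lt_trichotomy i j with h | rfl | h
  · simp [h.ne, h.ne', not_lt_of_gt h]
  · simp [mul_comm]
  · simp [h, h.ne, h.ne', this, mul_comm]

variable [Fintype ι] [DecidableEq ι] [CommRing R]

theorem det_unitUpperPart (A : Matrix ι ι R) : (unitUpperPart A).det = 1 := by
  rw [det_of_isUpperTriangular]
  · simp [unitUpperPart]
  · intro i j (h : j < i)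
    simp [unitUpperPart, h.ne', not_lt_of_gt h]

theorem inv_unitUpperPart (A : Matrix ι ι R) :
    (unitUpperPart A)⁻¹ = (unitUpperPart A).adjugate := by
  rw [inv_def, det_unitUpperPart, Ring.inverse_one, one_smul]

noncomputable def coxeterMatrix (A : Matrix ι ι R) : Matrix ι ι R :=
  (-(unitLowerPart A * (unitUpperPart A)⁻¹))ᵀ

theorem coxeterMatrix_map {S : Type*} [CommRing S] (A : Matrix ι ι R) (f : R →+* S) :
    (coxeterMatrix A).map f = coxeterMatrix (A.map f) := by
  rw [coxeterMatrix, coxeterMatrix, inv_unitUpperPart, inv_unitUpperPart, ← unitLowerPart_map,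
    ← unitUpperPart_map, transpose_map]
  simp only [← RingHom.mapMatrix_apply, map_neg, map_mul, RingHom.map_adjugate]

theorem transpose_coxeterMatrix_mul_mul_coxeterMatrix {A : Matrix ι ι R} {e : ι → R}
    (hA : ∀ i, A i i = 2) (hAe : (A * diagonal e).IsSymm) :
    (coxeterMatrix A)ᵀ * (A * diagonal e) * coxeterMatrix A = A * diagonal e := by
  rw [coxeterMatrix, transpose_transpose, transpose_neg, neg_mul, neg_mul_neg, transpose_mul]
  set L := unitLowerPart A
  set U := unitUpperPart A
  set E := diagonal e
  set V := U⁻¹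
  have hVU : V * U = 1 := nonsing_inv_mul U (by rw [det_unitUpperPart]; exact isUnit_one)
  have hLE : L * E = E * Uᵀ := unitLowerPart_mul_diagonal hAe
  have hUE : U * E = E * Lᵀ := by
    simpa [E, transpose_mul] using (congrArg transpose hLE).symm
  have hLEV : L * E * Vᵀ = E := by
    rw [hLE, Matrix.mul_assoc, ← transpose_mul, hVU, transpose_one, Matrix.mul_one]
  have hVEL : V * E * Lᵀ = E := by
    rw [Matrix.mul_assoc, ← hUE, ← Matrix.mul_assoc, hVU, Matrix.one_mul]
  have hL : L * V * (L * E) * (Vᵀ * Lᵀ) = L * E := by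
    calc _ = L * V * (L * E * Vᵀ) * Lᵀ := by simp only [Matrix.mul_assoc]
      _ = L * (V * E * Lᵀ) := by rw [hLEV]; simp only [Matrix.mul_assoc]
      _ = L * E := by rw [hVEL]
  have hU : L * V * (U * E) * (Vᵀ * Lᵀ) = U * E := by
    calc _ = L * (V * U) * E * Vᵀ * Lᵀ := by simp only [Matrix.mul_assoc]
      _ = U * E := by rw [hVU, Matrix.mul_one, hLEV, hUE]
  rw [show A * E = L * E + U * E by rw [← Matrix.add_mul, unitLowerPart_add_unitUpperPart hA],
    Matrix.mul_add, Matrix.add_mul, hL, hU]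

theorem isUnit_coxeterMatrix_sub_one {A : Matrix ι ι R} (hA : ∀ i, A i i = 2) (hA' : IsUnit A) :
    IsUnit (coxeterMatrix A - 1) := by
  have hU : IsUnit (unitUpperPart A).det := by rw [det_unitUpperPart]; exact isUnit_one
  have h : coxeterMatrix A - 1 = -((unitLowerPart A + unitUpperPart A) * (unitUpperPart A)⁻¹)ᵀ := by
    rw [Matrix.add_mul, mul_nonsing_inv _ hU, coxeterMatrix, transpose_neg, transpose_add,
      transpose_one]
    abel
  rw [h, unitLowerPart_add_unitUpperPart hA]
  exact ((isUnit_transpose _).2 (hA'.mul (isUnit_nonsing_inv_iff.2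
    ((isUnit_iff_isUnit_det _).2 hU)))).neg

end Coxeter

theorem isSymm_map_mul_diagonal_inv {ι : Type*} [Fintype ι] [DecidableEq ι] {A : Matrix ι ι ℤ}
    {d : ι → ℤ} (hd : ∀ i, d i ≠ 0) (hdA : ∀ i j, d i * A i j = d j * A j i) :
    (A.map (Int.castRingHom ℚ) * diagonal fun i => (d i : ℚ)⁻¹).IsSymm := by
  ext i j
  have hdi : (d i : ℚ) ≠ 0 := by exact_mod_cast hd i
  have hdj : (d j : ℚ) ≠ 0 := by exact_mod_cast hd j
  simp only [transpose_apply, mul_diagonal, map_apply, eq_intCast]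
  field_simp
  norm_cast
  linarith [hdA i j]

theorem posDef_map_mul_diagonal_inv {r : ℕ} {A : Matrix (Fin r) (Fin r) ℤ} {d : Fin r → ℤ}
    (hfin : IsFiniteType A) (hd : ∀ i, 0 < d i) (hdA : ∀ i j, d i * A i j = d j * A j i) :
    (A.map (Int.castRingHom ℚ) * diagonal fun i => (d i : ℚ)⁻¹).PosDef := by
  refine posDef_of_forall_det_submatrix_pos (isHermitian_iff_isSymm.2
    (isSymm_map_mul_diagonal_inv (fun i => (hd i).ne') hdA)) fun I hI => ?_
  have hsub : (A.map (Int.castRingHom ℚ) * diagonal fun i => (d i : ℚ)⁻¹).submatrix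
      ((↑) : I → Fin r) (↑) = (A.submatrix ((↑) : I → Fin r) (↑)).map (Int.castRingHom ℚ) *
        diagonal fun i : I => (d i : ℚ)⁻¹ := by
    ext i j; simp [mul_diagonal]
  rw [hsub, det_mul, det_diagonal, ← RingHom.mapMatrix_apply, ← RingHom.map_det]
  exact mul_pos (by simpa using hfin I hI) (Finset.prod_pos fun i _ => by simpa using hd i)

end Matrix

theorem coxeter_matrix_sum_eq_zero_general {r : ℕ}
    (A : Matrix (Fin r) (Fin r) ℤ) (hA : IsGCM A)
    (hsym : IsSymmetrisable A) (hfin : IsFiniteType A)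
    (L U C : Matrix (Fin r) (Fin r) ℚ)
    (hL : ∀ i j, L i j = if i = j then 1 else if j < i then (A i j : ℚ) else 0)
    (hU : ∀ i j, U i j = if i = j then 1 else if i < j then (A i j : ℚ) else 0)
    (hC : C = (-(L * U⁻¹))ᵀ) :
    ∃ h : ℕ, 0 < h ∧ (∑ k ∈ Finset.range h, C ^ k = 0) ∧ C ^ h = 1 := by
  obtain ⟨d, hd, hdA⟩ := hsym
  set f := Int.castRingHom ℚ
  have hdiag : ∀ i, A.map f i i = 2 := fun i => by simp [f, hA.1 i]
  have hCA : C = (coxeterMatrix A).map f := by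
    have hL' : L = unitLowerPart (A.map f) := by ext i j; simp [hL, unitLowerPart, f]
    have hU' : U = unitUpperPart (A.map f) := by ext i j; simp [hU, unitUpperPart, f]
    rw [coxeterMatrix_map, hC, coxeterMatrix, hL', hU']
  have hG := posDef_map_mul_diagonal_inv hfin hd hdA
  have hCG := transpose_coxeterMatrix_mul_mul_coxeterMatrix hdiag
    (isSymm_map_mul_diagonal_inv (fun i => (hd i).ne') hdA)
  rw [← coxeterMatrix_map] at hCG
  obtain ⟨h, hpos, hCh⟩ := isOfFinOrder_iff_pow_eq_one.1
    (hCA ▸ hG.isOfFinOrder_of_transpose_mul_mul_eq hCG)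
  have hAunit : IsUnit (A.map f) := (IsUnit.mul_right_iff (isUnit_diagonal.2
    (Pi.isUnit_iff.2 fun i => by simpa using (hd i).ne'))).1 hG.isUnit
  have hC1 : IsUnit (C - 1) := by
    rw [hCA, coxeterMatrix_map]
    exact isUnit_coxeterMatrix_sub_one hdiag hAunit
  exact ⟨h, hpos, hC1.mul_left_eq_zero.1 (by rw [geom_sum_mul, hCh, sub_self]), hCh⟩

/-- The matrix of the Coxeter element `C = (-L * U⁻¹)ᵀ` attached to a Cartan matrix of finite
type satisfies `I + C + C² + ⋯ + C^(h-1) = 0` (and hence `C^h = 1`) for some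
positive integer h. -/
theorem coxeter_matrix_sum_eq_zero {r : ℕ} (hr : 1 ≤ r)
    (A : Matrix (Fin r) (Fin r) ℤ) (hA : IsGCM A)
    (hsym : IsSymmetrisable A) (hfin : IsFiniteType A) (hind : IsIndecomposable A)
    (L U C : Matrix (Fin r) (Fin r) ℚ)
    (hL : ∀ i j, L i j = if i = j then 1 else if j < i then (A i j : ℚ) else 0)
    (hU : ∀ i j, U i j = if i = j then 1 else if i < j then (A i j : ℚ) else 0)
    (hC : C = (-(L * U⁻¹))ᵀ) :
    ∃ h : ℕ, 0 < h ∧ (∑ k ∈ Finset.range h, C ^ k = 0) ∧ C ^ h = 1 :=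
  coxeter_matrix_sum_eq_zero_general A hA hsym hfin L U C hL hU hC
end

section
/- For every r ≥ 1, the set of Y-frieze patterns of width r is finite; that is, the set of functions k : {0,1,…,r,r+1} × ℤ → ℤ with k(0,m) = k(r+1,m) = 0 and k(i,m) ≥ 1 for all i ∈ {1,…,r}, m ∈ ℤ, satisfying k(i,m)·k(i,m+1) = (1 + k(i+1,m))·(1 + k(i-1,m+1)) for all i ∈ {1,…,r}, m ∈ ℤ, is finite. -/
/-!
Multiplying the diamond rules of columns `m` and `m + 1` over all rows, the entries telescope
to `(1 + k(1,m)) (1 + k(r,m+1)) P(m) P(m+1) = Q(m) Q(m+1)`, where `P` and `Q` are the column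
products of `k` and of `1 + k`. As `1 + x ≤ 2x` for `x ≥ 1`, `Q ≤ 2^r P`, so the first row is
at most `4^r`, and `k(i+1,m) < k(i,m) k(i,m+1)` then bounds every row. The diamond rule can be
solved for either column in terms of the other, so a frieze is determined by its (bounded)
column `0`.
-/

open Finset

/-- A Y-frieze of width `r` with rows indexed by `ℕ`; only rows `0, …, r + 1` are constrained,
and the diamond rule is written at row `n + 1` to avoid truncated subtraction. -/
structure IsYFrieze (r : ℕ) (K : ℕ → ℤ → ℤ) : Prop where
  bottom : ∀ m, K 0 m = 0
  top : ∀ m, K (r + 1) m = 0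
  one_le : ∀ n m, n < r → 1 ≤ K (n + 1) m
  diamond : ∀ n m, n < r →
    K (n + 1) m * K (n + 1) (m + 1) = (1 + K (n + 2) m) * (1 + K n (m + 1))

namespace IsYFrieze

variable {r : ℕ} {K K' : ℕ → ℤ → ℤ}

theorem nonneg (hK : IsYFrieze r K) {n : ℕ} (hn : n ≤ r + 1) (m : ℤ) : 0 ≤ K n m := by
  rcases n with _ | n
  · rw [hK.bottom]
  rcases hn.lt_or_eq with hn | hn
  · exact zero_le_one.trans (hK.one_le n m (by omega))
  · rw [hn, hK.top]

theorem lt_mul (hK : IsYFrieze r K) {n : ℕ} (hn : n < r) (m : ℤ) :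
    K (n + 2) m < K (n + 1) m * K (n + 1) (m + 1) := by
  have h₁ := hK.nonneg (n := n + 2) (by omega) m
  have h₂ := hK.nonneg (n := n) (by omega) (m + 1)
  rw [hK.diamond n m hn]
  nlinarith [mul_nonneg h₁ h₂]

theorem prod_diamond (hK : IsYFrieze r K) (m : ℤ) :
    (1 + K 1 m) * (1 + K r (m + 1)) *
        ((∏ n ∈ range r, K (n + 1) m) * ∏ n ∈ range r, K (n + 1) (m + 1)) =
      (∏ n ∈ range r, (1 + K (n + 1) m)) * ∏ n ∈ range r, (1 + K (n + 1) (m + 1)) := by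
  have h₁ : (∏ n ∈ range r, (1 + K (n + 2) m)) * (1 + K 1 m) =
      ∏ n ∈ range r, (1 + K (n + 1) m) := by
    rw [← prod_range_succ' (fun n => 1 + K (n + 1) m), prod_range_succ, hK.top, add_zero, mul_one]
  have h₂ : (∏ n ∈ range r, (1 + K n (m + 1))) * (1 + K r (m + 1)) =
      ∏ n ∈ range r, (1 + K (n + 1) (m + 1)) := by
    rw [← prod_range_succ (fun n => 1 + K n (m + 1)), prod_range_succ', hK.bottom, add_zero,
      mul_one]
  rw [← h₁, ← h₂, ← prod_mul_distrib,
    prod_congr rfl fun n hn => hK.diamond n m (mem_range.1 hn), prod_mul_distrib]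
  ring

theorem one_add_apply_one_le (hK : IsYFrieze r K) (m : ℤ) : 1 + K 1 m ≤ 4 ^ r := by
  set P : ℤ → ℤ := fun m' => ∏ n ∈ range r, K (n + 1) m'
  have hP : ∀ m', 0 < P m' := fun m' =>
    prod_pos fun n hn => zero_lt_one.trans_le (hK.one_le n m' (mem_range.1 hn))
  have hQ : ∀ m', ∏ n ∈ range r, (1 + K (n + 1) m') ≤ 2 ^ r * P m' := fun m' => calc
    _ ≤ ∏ n ∈ range r, 2 * K (n + 1) m' := by
      refine prod_le_prod (fun n hn => ?_) fun n hn => ?_ <;>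
        linarith [hK.one_le n m' (mem_range.1 hn)]
    _ = 2 ^ r * P m' := by rw [prod_mul_distrib, prod_const, card_range]
  have key : (1 + K 1 m) * (1 + K r (m + 1)) * (P m * P (m + 1)) ≤ 4 ^ r * (P m * P (m + 1)) :=
    calc _ = (∏ n ∈ range r, (1 + K (n + 1) m)) * ∏ n ∈ range r, (1 + K (n + 1) (m + 1)) :=
          hK.prod_diamond m
      _ ≤ (2 ^ r * P m) * (2 ^ r * P (m + 1)) :=
          mul_le_mul (hQ m) (hQ (m + 1)) (prod_nonneg fun n hn => by
            linarith [hK.one_le n (m + 1) (mem_range.1 hn)]) (mul_nonneg (by positivity) (hP m).le)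
      _ = 4 ^ r * (P m * P (m + 1)) := by rw [show (4 : ℤ) = 2 * 2 by norm_num, mul_pow]; ring
  have hprod := le_of_mul_le_mul_right key (mul_pos (hP m) (hP (m + 1)))
  nlinarith [hK.nonneg (n := 1) (by omega) m, hK.nonneg (n := r) (by omega) (m + 1)]

theorem apply_succ_le (hK : IsYFrieze r K) {n : ℕ} (hn : n ≤ r) (m : ℤ) :
    K (n + 1) m ≤ 4 ^ (r * 2 ^ n) := by
  induction n generalizing m with
  | zero => simpa using (le_add_of_nonneg_left zero_le_one).trans (hK.one_add_apply_one_le m)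
  | succ n ih => calc
    K (n + 2) m ≤ K (n + 1) m * K (n + 1) (m + 1) := (hK.lt_mul (by omega) m).le
    _ ≤ 4 ^ (r * 2 ^ n) * 4 ^ (r * 2 ^ n) :=
      mul_le_mul (ih (by omega) m) (ih (by omega) (m + 1)) (hK.nonneg (by omega) _)
        (by positivity)
    _ = 4 ^ (r * 2 ^ (n + 1)) := by rw [← pow_add]; ring_nf

theorem mem_Icc (hK : IsYFrieze r K) {n : ℕ} (hn : n ≤ r + 1) (m : ℤ) :
    K n m ∈ Set.Icc 0 (4 ^ (r * 2 ^ r)) := by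
  refine ⟨hK.nonneg hn m, ?_⟩
  rcases n with _ | n
  · simp [hK.bottom]
  · exact (hK.apply_succ_le (by omega) m).trans <| pow_le_pow_right₀ (by norm_num) <|
      Nat.mul_le_mul_left r (Nat.pow_le_pow_right two_pos (by omega))

theorem eq_succ_of_eq (hK : IsYFrieze r K) (hK' : IsYFrieze r K') {m : ℤ}
    (h : ∀ n ≤ r + 1, K n m = K' n m) : ∀ n ≤ r + 1, K n (m + 1) = K' n (m + 1) := by
  intro n hn
  induction n with
  | zero => rw [hK.bottom, hK'.bottom]
  | succ n ih =>
    rcases hn.lt_or_eq with hn | hn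
    · have hn : n < r := by omega
      apply mul_left_cancel₀ (zero_lt_one.trans_le (hK.one_le n m hn)).ne'
      rw [hK.diamond n m hn, h (n + 2) (by omega), ih (by omega), h (n + 1) (by omega),
        hK'.diamond n m hn]
    · rw [hn, hK.top, hK'.top]

theorem eq_of_eq_succ (hK : IsYFrieze r K) (hK' : IsYFrieze r K') {m : ℤ}
    (h : ∀ n ≤ r + 1, K n (m + 1) = K' n (m + 1)) : ∀ n ≤ r + 1, K n m = K' n m := by
  intro n hn
  induction hn using Nat.decreasingInduction with
  | self => rw [hK.top, hK'.top]
  | of_succ n hn ih =>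
    rcases n with _ | n
    · rw [hK.bottom, hK'.bottom]
    · have hn : n < r := by omega
      apply mul_right_cancel₀ (zero_lt_one.trans_le (hK.one_le n (m + 1) hn)).ne'
      rw [hK.diamond n m hn, ih, h n (by omega), h (n + 1) (by omega), hK'.diamond n m hn]

theorem eq_of_eq_zero (hK : IsYFrieze r K) (hK' : IsYFrieze r K')
    (h : ∀ n ≤ r + 1, K n 0 = K' n 0) (m : ℤ) : ∀ n ≤ r + 1, K n m = K' n m := by
  induction m using Int.induction_on with
  | zero => exact h
  | succ m ih => exact hK.eq_succ_of_eq hK' ih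
  | pred m ih => exact hK.eq_of_eq_succ hK' (by rwa [sub_add_cancel])

end IsYFrieze

open Fin.NatCast in
theorem isYFrieze_natCast {r : ℕ} {k : Fin (r + 2) → ℤ → ℤ} (h₀ : ∀ m, k 0 m = 0)
    (hlast : ∀ m, k (Fin.last (r + 1)) m = 0)
    (hpos : ∀ (i : Fin (r + 2)) (m : ℤ), 1 ≤ (i : ℕ) → (i : ℕ) ≤ r → 1 ≤ k i m)
    (hdiamond : ∀ (i : Fin (r + 2)) (m : ℤ), 1 ≤ (i : ℕ) → (i : ℕ) ≤ r →
      k i m * k i (m + 1) = (1 + k (i + 1) m) * (1 + k (i - 1) (m + 1))) :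
    IsYFrieze r fun (n : ℕ) => k n where
  bottom := by simpa using h₀
  top m := (congrFun (congrArg k (Fin.natCast_eq_last (r + 1))) m).trans (hlast m)
  one_le n m hn := by
    have hval : (((n + 1 : ℕ) : Fin (r + 2)) : ℕ) = n + 1 := Fin.val_cast_of_lt (by omega)
    exact hpos _ m (by omega) (by omega)
  diamond n m hn := by
    have hval : (((n + 1 : ℕ) : Fin (r + 2)) : ℕ) = n + 1 := Fin.val_cast_of_lt (by omega)
    have := hdiamond ((n + 1 : ℕ) : Fin (r + 2)) m (by omega) (by omega)
    push_cast at this ⊢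
    simpa [add_assoc, one_add_one_eq_two] using this

theorem Yfrieze_width_finite_general (r : ℕ) :
    Set.Finite {k : Fin (r + 2) → ℤ → ℤ |
      (∀ m, k 0 m = 0) ∧ (∀ m, k (Fin.last (r + 1)) m = 0) ∧
      (∀ (i : Fin (r + 2)) (m : ℤ), 1 ≤ (i : ℕ) → (i : ℕ) ≤ r → 1 ≤ k i m) ∧
      (∀ (i : Fin (r + 2)) (m : ℤ), 1 ≤ (i : ℕ) → (i : ℕ) ≤ r →
        k i m * k i (m + 1) = (1 + k (i + 1) m) * (1 + k (i - 1) (m + 1)))} := by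
  refine Set.Finite.of_injOn (f := fun k i => k i 0)
    (t := Set.univ.pi fun _ => Set.Icc 0 (4 ^ (r * 2 ^ r))) ?_ ?_
    (Set.Finite.pi fun _ => Set.finite_Icc _ _)
  · rintro k ⟨h₀, hlast, hpos, hdiamond⟩ i -
    simpa using (isYFrieze_natCast h₀ hlast hpos hdiamond).mem_Icc i.is_le 0
  · rintro k ⟨h₀, hlast, hpos, hdiamond⟩ k' ⟨h₀', hlast', hpos', hdiamond'⟩ hcol
    have hK := isYFrieze_natCast h₀ hlast hpos hdiamond
    have hK' := isYFrieze_natCast h₀' hlast' hpos' hdiamond'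
    funext i m
    simpa using hK.eq_of_eq_zero hK' (fun n _ => congrFun hcol _) m i i.is_le

/-- There are finitely many Y-frieze patterns of width `r`. -/
theorem Yfrieze_width_finite (r : ℕ) (hr : 1 ≤ r) :
    Set.Finite {k : Fin (r + 2) → ℤ → ℤ |
      (∀ m, k 0 m = 0) ∧ (∀ m, k (Fin.last (r + 1)) m = 0) ∧
      (∀ (i : Fin (r + 2)) (m : ℤ), 1 ≤ (i : ℕ) → (i : ℕ) ≤ r → 1 ≤ k i m) ∧
      (∀ (i : Fin (r + 2)) (m : ℤ), 1 ≤ (i : ℕ) → (i : ℕ) ≤ r →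
        k i m * k i (m + 1) = (1 + k (i + 1) m) * (1 + k (i - 1) (m + 1)))} :=
  Yfrieze_width_finite_general r
end

section
/- Let F be a field and let x : ℤ → F satisfy x(m) ≠ 0 for all m ∈ ℤ, x(m)·x(m+2) = 1 + x(m+1) for all odd m ∈ ℤ, and x(m)·x(m+2) = (1 + x(m+1))² for all even m ∈ ℤ. Then x(m+6) = x(m) for all m ∈ ℤ. -/
/-!
Put `a = x m` and `b = x (m + 1)`. Clearing denominators in each exchange relation, and cancelling
earlier terms (which are nonzero), shows that the next five terms are the Laurent polynomials
`(1 + b)² / a, (a + (1 + b)²) / (a b), (a + b + 1)² / (a b²), (a + 1) / b, a` when `m` is even, and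
`(1 + b) / a, (a + b + 1)² / (a² b), ((a + 1)² + b) / (a b), (a + 1)² / b, a` when `m` is odd.
-/

section ExchangeRelations

variable {F : Type*} [Field F] {x₀ x₁ x₂ x₃ x₄ x₅ x₆ : F}

theorem sixth_eq_zeroth_of_exchange_two_one (h₀ : x₀ ≠ 0) (h₁ : x₁ ≠ 0) (h₂ : x₂ ≠ 0)
    (h₃ : x₃ ≠ 0) (h₄ : x₄ ≠ 0)
    (e₀ : x₀ * x₂ = (1 + x₁) ^ 2) (e₁ : x₁ * x₃ = 1 + x₂) (e₂ : x₂ * x₄ = (1 + x₃) ^ 2)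
    (e₃ : x₃ * x₅ = 1 + x₄) (e₄ : x₄ * x₆ = (1 + x₅) ^ 2) : x₆ = x₀ := by
  have l₃ : x₀ * x₁ * x₃ = x₀ + (1 + x₁) ^ 2 := by linear_combination x₀ * e₁ + e₀
  have l₄ : x₀ * x₁ ^ 2 * x₄ = (x₀ + x₁ + 1) ^ 2 := mul_left_cancel₀ (mul_ne_zero h₀ h₂) <| by
    linear_combination x₀ ^ 2 * x₁ ^ 2 * e₂ - (x₀ + x₁ + 1) ^ 2 * e₀ +
      (2 * x₀ * x₁ + x₀ * x₁ * x₃ + x₀ + (1 + x₁) ^ 2) * l₃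
  have l₅ : x₁ * x₅ = x₀ + 1 := mul_left_cancel₀ (mul_ne_zero (mul_ne_zero h₀ h₁) h₃) <| by
    linear_combination x₀ * x₁ ^ 2 * e₃ + l₄ - (x₀ + 1) * l₃
  exact mul_left_cancel₀ (mul_ne_zero (pow_ne_zero 2 h₁) h₄) <| by
    linear_combination x₁ ^ 2 * e₄ + (x₁ * x₅ + x₀ + 1 + 2 * x₁) * l₅ - l₄

theorem sixth_eq_zeroth_of_exchange_one_two (h₀ : x₀ ≠ 0) (h₁ : x₁ ≠ 0) (h₂ : x₂ ≠ 0)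
    (h₃ : x₃ ≠ 0) (h₄ : x₄ ≠ 0)
    (e₀ : x₀ * x₂ = 1 + x₁) (e₁ : x₁ * x₃ = (1 + x₂) ^ 2) (e₂ : x₂ * x₄ = 1 + x₃)
    (e₃ : x₃ * x₅ = (1 + x₄) ^ 2) (e₄ : x₄ * x₆ = 1 + x₅) : x₆ = x₀ := by
  have l₃ : x₀ ^ 2 * x₁ * x₃ = (x₀ + x₁ + 1) ^ 2 := by
    linear_combination x₀ ^ 2 * e₁ + (2 * x₀ + x₀ * x₂ + 1 + x₁) * e₀
  have l₄ : x₀ * x₁ * x₄ = (x₀ + 1) ^ 2 + x₁ := mul_left_cancel₀ (mul_ne_zero h₀ h₂) <| by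
    linear_combination x₀ ^ 2 * x₁ * e₂ + l₃ - ((x₀ + 1) ^ 2 + x₁) * e₀
  have l₅ : x₁ * x₅ = (x₀ + 1) ^ 2 :=
    mul_left_cancel₀ (mul_ne_zero (mul_ne_zero (pow_ne_zero 2 h₀) h₁) h₃) <| by
      linear_combination x₀ ^ 2 * x₁ ^ 2 * e₃ - (x₀ + 1) ^ 2 * l₃ +
        (2 * x₀ * x₁ + x₀ * x₁ * x₄ + (x₀ + 1) ^ 2 + x₁) * l₄
  exact mul_left_cancel₀ (mul_ne_zero (mul_ne_zero h₀ h₁) h₄) <| by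
    linear_combination x₀ * x₁ * e₄ + x₀ * l₅ - x₀ * l₄

end ExchangeRelations

/-- Periodicity of the type C₂ generalised cluster recursion. -/
theorem period_six {F : Type*} [Field F] (x : ℤ → F)
    (hx : ∀ m, x m ≠ 0)
    (hodd : ∀ m, Odd m → x m * x (m + 2) = 1 + x (m + 1))
    (heven : ∀ m, Even m → x m * x (m + 2) = (1 + x (m + 1)) ^ 2) :
    ∀ m, x (m + 6) = x m := by
  intro m
  rcases Int.even_or_odd m with hm | hm
  · have e₁ := hodd (m + 1) (hm.add_odd (by decide))
    have e₂ := heven (m + 2) (hm.add (by decide))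
    have e₃ := hodd (m + 3) (hm.add_odd (by decide))
    have e₄ := heven (m + 4) (hm.add (by decide))
    simp only [add_assoc, Int.reduceAdd] at e₁ e₂ e₃ e₄
    exact sixth_eq_zeroth_of_exchange_two_one (hx _) (hx _) (hx _) (hx _) (hx _)
      (heven m hm) e₁ e₂ e₃ e₄
  · have e₁ := heven (m + 1) (hm.add_odd (by decide))
    have e₂ := hodd (m + 2) (hm.add_even (by decide))
    have e₃ := heven (m + 3) (hm.add_odd (by decide))
    have e₄ := hodd (m + 4) (hm.add_even (by decide))
    simp only [add_assoc, Int.reduceAdd] at e₁ e₂ e₃ e₄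
    exact sixth_eq_zeroth_of_exchange_one_two (hx _) (hx _) (hx _) (hx _) (hx _)
      (hodd m hm) e₁ e₂ e₃ e₄
end

section
/- Let F be a field and let x : ℤ → F satisfy x(m) ≠ 0 for all m ∈ ℤ, x(m)·x(m+2) = 1 + x(m+1) for all odd m ∈ ℤ, and x(m)·x(m+2) = (1 + x(m+1))³ for all even m ∈ ℤ. Then x(m+8) = x(m) for all m ∈ ℤ. -/
/-- Periodicity of the type G₂ generalised cluster recursion. -/
theorem period_eight {F : Type*} [Field F] (x : ℤ → F)
    (hx : ∀ m, x m ≠ 0)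
    (hodd : ∀ m, Odd m → x m * x (m + 2) = 1 + x (m + 1))
    (heven : ∀ m, Even m → x m * x (m + 2) = (1 + x (m + 1)) ^ 3) :
    ∀ m, x (m + 8) = x m := by
  intro m
  have n0 : x m ≠ 0 := hx m
  have n1 : x (m+1) ≠ 0 := hx (m+1)
  have n2 : x (m+2) ≠ 0 := hx (m+2)
  have n3 : x (m+3) ≠ 0 := hx (m+3)
  have n4 : x (m+4) ≠ 0 := hx (m+4)
  have n5 : x (m+5) ≠ 0 := hx (m+5)
  have n6 : x (m+6) ≠ 0 := hx (m+6)
  rcases Int.even_or_odd m with hm | hm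
  · -- m even
    obtain ⟨t, ht⟩ := hm
    have h0 := heven m ⟨t, ht⟩
    have h1 := hodd (m+1) ⟨t, by omega⟩
    have h2 := heven (m+2) ⟨t+1, by omega⟩
    have h3 := hodd (m+3) ⟨t+1, by omega⟩
    have h4 := heven (m+4) ⟨t+2, by omega⟩
    have h5 := hodd (m+5) ⟨t+2, by omega⟩
    have h6 := heven (m+6) ⟨t+3, by omega⟩
    rw [show m+1+2 = m+3 by ring, show m+1+1 = m+2 by ring] at h1
    rw [show m+2+2 = m+4 by ring, show m+2+1 = m+3 by ring] at h2
    rw [show m+3+2 = m+5 by ring, show m+3+1 = m+4 by ring] at h3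
    rw [show m+4+2 = m+6 by ring, show m+4+1 = m+5 by ring] at h4
    rw [show m+5+2 = m+7 by ring, show m+5+1 = m+6 by ring] at h5
    rw [show m+6+2 = m+8 by ring, show m+6+1 = m+7 by ring] at h6
    set a := x m with ha
    set b := x (m+1) with hb
    have F2 : x (m+2) * a = (1+b)^3 := by linear_combination h0
    have hP2 : (1+b)^3 ≠ 0 := F2 ▸ mul_ne_zero n2 n0
    have F3 : x (m+3) * (a*b) = a + (1+b)^3 := by linear_combination a*h1 + F2
    have hP3 : a + (1+b)^3 ≠ 0 := F3 ▸ mul_ne_zero n3 (mul_ne_zero n0 n1)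
    have G4 : x (m+4) * (a^2*b^3) * (1+b)^3 = (a+(1+b)^2)^3 * (1+b)^3 := by
      linear_combination (-(x (m+4)*(a^2*b^3)))*F2 + (a^3*b^3)*h2 +
        ((a*b + a*b*x (m+3))^2 + (a*b + a*b*x (m+3))*(a*b + (a + (1+b)^3))
          + (a*b + (a + (1+b)^3))^2) * F3
    have F4 : x (m+4) * (a^2*b^3) = (a+(1+b)^2)^3 := mul_right_cancel₀ hP2 G4
    have hP4 : (a+(1+b)^2)^3 ≠ 0 :=
      F4 ▸ mul_ne_zero n4 (mul_ne_zero (pow_ne_zero _ n0) (pow_ne_zero _ n1))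
    have G5 : x (m+5) * (a*b^2) * (a + (1+b)^3)
        = (a^2 + a*(3*b+2) + (1+b)^3) * (a + (1+b)^3) := by
      linear_combination (-(x (m+5)*(a*b^2)))*F3 + (a^2*b^3)*h3 + F4
    have F5 : x (m+5) * (a*b^2) = a^2 + a*(3*b+2) + (1+b)^3 := mul_right_cancel₀ hP3 G5
    have hP5 : a^2 + a*(3*b+2) + (1+b)^3 ≠ 0 :=
      F5 ▸ mul_ne_zero n5 (mul_ne_zero n0 (pow_ne_zero _ n1))
    have G6 : x (m+6) * (a*b^3) * (a+(1+b)^2)^3 = (1+a+b)^3 * (a+(1+b)^2)^3 := by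
      linear_combination (-(x (m+6)*(a*b^3)))*F4 + (a^3*b^6)*h4 +
        ((a*b^2 + a*b^2*x (m+5))^2
          + (a*b^2 + a*b^2*x (m+5))*(a*b^2 + (a^2 + a*(3*b+2) + (1+b)^3))
          + (a*b^2 + (a^2 + a*(3*b+2) + (1+b)^3))^2) * F5
    have F6 : x (m+6) * (a*b^3) = (1+a+b)^3 := mul_right_cancel₀ hP4 G6
    have hP6 : (1+a+b)^3 ≠ 0 := F6 ▸ mul_ne_zero n6 (mul_ne_zero n0 (pow_ne_zero _ n1))
    have G7 : x (m+7) * b * (a^2 + a*(3*b+2) + (1+b)^3)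
        = (1+a) * (a^2 + a*(3*b+2) + (1+b)^3) := by
      linear_combination (-(x (m+7)*b))*F5 + (a*b^3)*h5 + F6
    have F7 : x (m+7) * b = 1+a := mul_right_cancel₀ hP5 G7
    have G8 : x (m+8) * (b^3 * (1+a+b)^3) = a * (b^3 * (1+a+b)^3) := by
      linear_combination (-(x (m+8)*b^3))*F6 + (a*b^6)*h6 +
        (a*b^3*((b + b*x (m+7))^2 + (b + b*x (m+7))*(b + (1+a)) + (b + (1+a))^2))*F7
    exact mul_right_cancel₀ (mul_ne_zero (pow_ne_zero _ n1) hP6) G8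
  · -- m odd
    obtain ⟨t, ht⟩ := hm
    have h0 := hodd m ⟨t, ht⟩
    have h1 := heven (m+1) ⟨t+1, by omega⟩
    have h2 := hodd (m+2) ⟨t+1, by omega⟩
    have h3 := heven (m+3) ⟨t+2, by omega⟩
    have h4 := hodd (m+4) ⟨t+2, by omega⟩
    have h5 := heven (m+5) ⟨t+3, by omega⟩
    have h6 := hodd (m+6) ⟨t+3, by omega⟩
    rw [show m+1+2 = m+3 by ring, show m+1+1 = m+2 by ring] at h1
    rw [show m+2+2 = m+4 by ring, show m+2+1 = m+3 by ring] at h2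
    rw [show m+3+2 = m+5 by ring, show m+3+1 = m+4 by ring] at h3
    rw [show m+4+2 = m+6 by ring, show m+4+1 = m+5 by ring] at h4
    rw [show m+5+2 = m+7 by ring, show m+5+1 = m+6 by ring] at h5
    rw [show m+6+2 = m+8 by ring, show m+6+1 = m+7 by ring] at h6
    set a := x m with ha
    set b := x (m+1) with hb
    have F2 : x (m+2) * a = 1+b := by linear_combination h0
    have hP2 : (1:F)+b ≠ 0 := F2 ▸ mul_ne_zero n2 n0
    have G3 : x (m+3) * (a^3*b) = (1+a+b)^3 := by
      linear_combination (a^3)*h1 +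
        ((a + a*x (m+2))^2 + (a + a*x (m+2))*(a + (1+b)) + (a + (1+b))^2) * F2
    have hP3 : (1+a+b)^3 ≠ 0 :=
      G3 ▸ mul_ne_zero n3 (mul_ne_zero (pow_ne_zero _ n0) n1)
    have G4 : x (m+4) * (a^2*b) * (1+b)
        = ((1+b)^2 + 3*a*(1+b) + 3*a^2 + a^3) * (1+b) := by
      linear_combination (-(x (m+4)*(a^2*b)))*F2 + (a^3*b)*h2 + G3
    have F4 : x (m+4) * (a^2*b) = (1+b)^2 + 3*a*(1+b) + 3*a^2 + a^3 :=
      mul_right_cancel₀ hP2 G4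
    have hP4 : (1+b)^2 + 3*a*(1+b) + 3*a^2 + a^3 ≠ 0 :=
      F4 ▸ mul_ne_zero n4 (mul_ne_zero (pow_ne_zero _ n0) n1)
    have G5 : x (m+5) * (a^3*b^2) * (1+a+b)^3 = ((1+a)^2 + b)^3 * (1+a+b)^3 := by
      linear_combination (-(x (m+5)*(a^3*b^2)))*G3 + (a^6*b^3)*h3 +
        ((a^2*b + a^2*b*x (m+4))^2
          + (a^2*b + a^2*b*x (m+4))*(a^2*b + ((1+b)^2 + 3*a*(1+b) + 3*a^2 + a^3))
          + (a^2*b + ((1+b)^2 + 3*a*(1+b) + 3*a^2 + a^3))^2) * F4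
    have F5 : x (m+5) * (a^3*b^2) = ((1+a)^2 + b)^3 := mul_right_cancel₀ hP3 G5
    have hP5 : ((1+a)^2 + b)^3 ≠ 0 :=
      F5 ▸ mul_ne_zero n5 (mul_ne_zero (pow_ne_zero _ n0) (pow_ne_zero _ n1))
    have G6 : x (m+6) * (a*b) * ((1+b)^2 + 3*a*(1+b) + 3*a^2 + a^3)
        = (b + (1+a)^3) * ((1+b)^2 + 3*a*(1+b) + 3*a^2 + a^3) := by
      linear_combination (-(x (m+6)*(a*b)))*F4 + (a^3*b^2)*h4 + F5
    have F6 : x (m+6) * (a*b) = b + (1+a)^3 := mul_right_cancel₀ hP4 G6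
    have hP6 : b + (1+a)^3 ≠ 0 := F6 ▸ mul_ne_zero n6 (mul_ne_zero n0 n1)
    have G7 : x (m+7) * b * ((1+a)^2 + b)^3 = (1+a)^3 * ((1+a)^2 + b)^3 := by
      linear_combination (-(x (m+7)*b))*F5 + (a^3*b^3)*h5 +
        ((a*b + a*b*x (m+6))^2 + (a*b + a*b*x (m+6))*(a*b + (b + (1+a)^3))
          + (a*b + (b + (1+a)^3))^2) * F6
    have F7 : x (m+7) * b = (1+a)^3 := mul_right_cancel₀ hP5 G7
    have G8 : x (m+8) * (b * (b + (1+a)^3)) = a * (b * (b + (1+a)^3)) := by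
      linear_combination (-(x (m+8)*b))*F6 + (a*b^2)*h6 + (a*b)*F7
    exact mul_right_cancel₀ (mul_ne_zero n1 hP6) G8
end

section
/- Let r ≥ 1 and let f : {0,1,…,r,r+1} × ℤ → ℤ satisfy f(0,m) = f(r+1,m) = 0, f(i,m) ≥ 0 for all i ∈ {1,…,r}, m ∈ ℤ, and the additive relation f(i,m) + f(i,m+1) = f(i+1,m) + f(i-1,m+1) for all i ∈ {1,…,r}, m ∈ ℤ. Then f is identically zero. -/
/-- There are no non-trivial nonnegative tropical Y-frieze patterns of width `r`
(type A_r cluster-additive functions). -/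
theorem tropical_Yfrieze_width_trivial (r : ℕ) (hr : 1 ≤ r) (f : ℕ → ℤ → ℤ)
    (hf0 : ∀ m, f 0 m = 0) (hfr : ∀ m, f (r + 1) m = 0)
    (hnonneg : ∀ i m, 1 ≤ i → i ≤ r → 0 ≤ f i m)
    (hrel : ∀ i m, 1 ≤ i → i ≤ r →
      f i m + f i (m + 1) = f (i + 1) m + f (i - 1) (m + 1)) :
    ∀ i m, i ≤ r + 1 → f i m = 0 := by
  have key : ∀ i, i ≤ r → ∀ m, f (i + 1) m - f i (m + 1) = f 1 m := by
    intro i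
    induction i with
    | zero => intro _ m; simp [hf0]
    | succ j ih =>
      intro hle m
      have h1 : 1 ≤ j + 1 := Nat.le_add_left 1 j
      have hrel' := hrel (j + 1) m h1 hle
      simp only [Nat.add_sub_cancel] at hrel'
      have ihm := ih (le_trans (Nat.le_succ j) hle) m
      linarith
  have h1zero : ∀ m, f 1 m = 0 := by
    intro m
    have hk := key r le_rfl m
    have hfr' := hfr m
    have hn1 := hnonneg 1 m le_rfl hr
    have hnr := hnonneg r (m + 1) hr le_rfl
    linarith
  have diag : ∀ i, i ≤ r → ∀ m, f (i + 1) m = f i (m + 1) := by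
    intro i hi m
    have hk := key i hi m
    rw [h1zero] at hk
    linarith
  intro i
  induction i with
  | zero => intro m _; exact hf0 m
  | succ j ih =>
    intro m hj
    by_cases h : j + 1 = r + 1
    · rw [h]; exact hfr m
    · rw [diag j (by omega) m]
      exact ih (m + 1) (by omega)
end
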